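/- arXiv:2503.14344 — 3 statements merged into one kernel-verified Lean document; each statement's English description precedes it below -/
import Mathlib

section
/- For every integer n ≥ 3, every optimal set α of n-means for the condensation measure P satisfies α ∩ [0, 1/5] ≠ ∅, α ∩ [4/5, 1] ≠ ∅, and α ∩ [2/5, 3/5] ≠ ∅. -/
open MeasureTheory Metric Set Filter

/-- The distortion error of a set `α` of quantizer points for `μ`, of order 2:
`∫ min_{a ∈ α} (x - a)^2 dμ(x)`. -/
noncomputable def distortion (μ : MeasureTheory.Measure ℝ) (α : Set ℝ) : ℝ :=
  ∫ x, (Metric.infDist x α) ^ 2 ∂μ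

/-- The `n`th quantization error of order 2 for `μ`. -/
noncomputable def quantErr (μ : MeasureTheory.Measure ℝ) (n : ℕ) : ℝ :=
  sInf {e : ℝ | ∃ α : Set ℝ, α.Finite ∧ α.Nonempty ∧ α.ncard ≤ n ∧ e = distortion μ α}

/-- `α` is an optimal set of `n`-means for `μ`. -/
def IsOptimalSet (μ : MeasureTheory.Measure ℝ) (n : ℕ) (α : Set ℝ) : Prop :=
  α.Finite ∧ α.Nonempty ∧ α.ncard ≤ n ∧ distortion μ α = quantErr μ n

/-- The similarity `S₁(x) = x/5`. -/
noncomputable def S1 : ℝ → ℝ := fun x => x / 5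

/-- The similarity `S₂(x) = x/5 + 4/5`. -/
noncomputable def S2 : ℝ → ℝ := fun x => x / 5 + 4 / 5

/-- `P` is the condensation measure associated with `(S₁, S₂; 1/3, 1/3, 1/3; ν)`:
`P = (1/3) P∘S₁⁻¹ + (1/3) P∘S₂⁻¹ + (1/3) ν`. -/
def IsCondensation (P ν : MeasureTheory.Measure ℝ) : Prop :=
  MeasureTheory.IsProbabilityMeasure P ∧
    P = (1 / 3 : ENNReal) • P.map S1 + (1 / 3 : ENNReal) • P.map S2 + (1 / 3 : ENNReal) • ν

/-- The uniform distribution on `[2/5, 3/5]`, i.e. the measure with density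
`5 · 1_{[2/5, 3/5]}` with respect to Lebesgue measure. -/
noncomputable def nuUnif : MeasureTheory.Measure ℝ :=
  (5 : ENNReal) • (MeasureTheory.volume.restrict (Set.Icc (2 / 5 : ℝ) (3 / 5)))

namespace CondAux

open intervalIntegral

lemma cont_S1 : Continuous S1 := by unfold S1; fun_prop
lemma cont_S2 : Continuous S2 := by unfold S2; fun_prop

lemma int_sq (a b c : ℝ) : (∫ x in a..b, (x - c)^2) = ((b-c)^3 - (a-c)^3)/3 := by
  have h := intervalIntegral.integral_comp_sub_right (a := a) (b := b) (fun x => x^2) c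
  rw [h, integral_pow]
  norm_num

lemma third_ne_top : (1/3 : ENNReal) ≠ ⊤ := by
  rw [one_div]
  exact ENNReal.inv_ne_top.mpr (by simp)

lemma ennToReal_third : (1/3 : ENNReal).toReal = 1/3 := by
  rw [ENNReal.toReal_div]
  norm_num

lemma nu_integral (f : ℝ → ℝ) (hf : Continuous f) :
    ∫ x, f x ∂nuUnif = 5 * ∫ x in (2/5:ℝ)..(3/5), f x := by
  rw [nuUnif, MeasureTheory.integral_smul_measure]
  rw [intervalIntegral.integral_of_le (by norm_num : (2/5:ℝ) ≤ 3/5)]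
  rw [← MeasureTheory.integral_Icc_eq_integral_Ioc]
  norm_num

lemma nu_compl : nuUnif (Set.Icc (0:ℝ) 1)ᶜ = 0 := by
  rw [nuUnif, Measure.smul_apply, Measure.restrict_apply (measurableSet_Icc.compl)]
  have h : (Set.Icc (0:ℝ) 1)ᶜ ∩ Set.Icc (2/5:ℝ) (3/5) = ∅ := by
    apply Set.eq_empty_iff_forall_notMem.mpr
    rintro x ⟨hc, hm⟩
    rw [Set.mem_Icc] at hm
    exact hc (Set.mem_Icc.mpr ⟨by linarith [hm.1], by linarith [hm.2]⟩)
  rw [h]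
  simp

section Pfacts

variable {P : Measure ℝ} (hP : IsCondensation P nuUnif)
include hP

lemma P_ae : ∀ᵐ x ∂P, x ∈ Set.Icc (0:ℝ) 1 := by
  haveI := hP.1
  have hms : MeasurableSet ((Set.Icc (0:ℝ) 1)ᶜ) := measurableSet_Icc.compl
  have h1 : P ((Set.Icc (0:ℝ) 1)ᶜ) = 1/3 * (P.map S1) ((Set.Icc (0:ℝ) 1)ᶜ)
      + 1/3 * (P.map S2) ((Set.Icc (0:ℝ) 1)ᶜ) + 1/3 * nuUnif ((Set.Icc (0:ℝ) 1)ᶜ) := by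
    conv_lhs => rw [hP.2]
    simp [Measure.add_apply, Measure.smul_apply, smul_eq_mul]
  have h2 : (P.map S1) ((Set.Icc (0:ℝ) 1)ᶜ) ≤ P ((Set.Icc (0:ℝ) 1)ᶜ) := by
    rw [Measure.map_apply cont_S1.measurable hms]
    apply measure_mono
    intro x hx
    simp only [Set.mem_preimage, Set.mem_compl_iff] at *
    intro hx0
    rw [Set.mem_Icc] at hx0
    exact hx (Set.mem_Icc.mpr ⟨by unfold S1; linarith [hx0.1], by unfold S1; linarith [hx0.2]⟩)
  have h3 : (P.map S2) ((Set.Icc (0:ℝ) 1)ᶜ) ≤ P ((Set.Icc (0:ℝ) 1)ᶜ) := by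
    rw [Measure.map_apply cont_S2.measurable hms]
    apply measure_mono
    intro x hx
    simp only [Set.mem_preimage, Set.mem_compl_iff] at *
    intro hx0
    rw [Set.mem_Icc] at hx0
    exact hx (Set.mem_Icc.mpr ⟨by unfold S2; linarith [hx0.1], by unfold S2; linarith [hx0.2]⟩)
  have h4 : P ((Set.Icc (0:ℝ) 1)ᶜ) = 0 := by
    have hfin : P ((Set.Icc (0:ℝ) 1)ᶜ) ≠ ⊤ := measure_ne_top P _
    have hfin1 : (P.map S1) ((Set.Icc (0:ℝ) 1)ᶜ) ≠ ⊤ := lt_top_iff_ne_top.mp (lt_of_le_of_lt h2 hfin.lt_top)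
    have hfin2 : (P.map S2) ((Set.Icc (0:ℝ) 1)ᶜ) ≠ ⊤ := lt_top_iff_ne_top.mp (lt_of_le_of_lt h3 hfin.lt_top)
    have hr : (P ((Set.Icc (0:ℝ) 1)ᶜ)).toReal = 1/3 * ((P.map S1) ((Set.Icc (0:ℝ) 1)ᶜ)).toReal
          + 1/3 * ((P.map S2) ((Set.Icc (0:ℝ) 1)ᶜ)).toReal + 0 := by
      rw [h1, nu_compl]
      rw [ENNReal.toReal_add, ENNReal.toReal_add, ENNReal.toReal_mul, ENNReal.toReal_mul,
        ENNReal.toReal_mul, ennToReal_third]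
      · norm_num
      · exact ENNReal.mul_ne_top third_ne_top hfin1
      · exact ENNReal.mul_ne_top third_ne_top hfin2
      · exact ENNReal.add_ne_top.mpr ⟨ENNReal.mul_ne_top third_ne_top hfin1,
          ENNReal.mul_ne_top third_ne_top hfin2⟩
      · simp
    have m1 : ((P.map S1) ((Set.Icc (0:ℝ) 1)ᶜ)).toReal ≤ (P ((Set.Icc (0:ℝ) 1)ᶜ)).toReal :=
      ENNReal.toReal_mono hfin h2
    have m2 : ((P.map S2) ((Set.Icc (0:ℝ) 1)ᶜ)).toReal ≤ (P ((Set.Icc (0:ℝ) 1)ᶜ)).toReal :=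
      ENNReal.toReal_mono hfin h3
    have ht0 : (P ((Set.Icc (0:ℝ) 1)ᶜ)).toReal = 0 := by
      linarith [ENNReal.toReal_nonneg (a := P ((Set.Icc (0:ℝ) 1)ᶜ))]
    exact (ENNReal.toReal_eq_zero_iff _).mp ht0 |>.resolve_right hfin
  rw [ae_iff]
  exact h4

lemma P_integrable (f : ℝ → ℝ) (hf : Continuous f) : Integrable f P := by
  haveI := hP.1
  obtain ⟨C, hC⟩ : ∃ C, ∀ y ∈ Set.Icc (0:ℝ) 1, ‖f y‖ ≤ C :=
    isCompact_Icc.exists_bound_of_continuousOn hf.continuousOn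
  exact ⟨hf.aestronglyMeasurable,
    MeasureTheory.HasFiniteIntegral.of_bounded ((P_ae hP).mono fun x hx => hC x hx)⟩

lemma P_eq (f : ℝ → ℝ) (hf : Continuous f) :
    ∫ x, f x ∂P = 1/3 * (∫ x, f (S1 x) ∂P) + 1/3 * (∫ x, f (S2 x) ∂P)
      + 1/3 * (5 * ∫ x in (2/5:ℝ)..(3/5), f x) := by
  haveI := hP.1
  have hi1 : Integrable f (P.map S1) := by
    rw [integrable_map_measure hf.aestronglyMeasurable cont_S1.measurable.aemeasurable]
    exact P_integrable hP _ (hf.comp cont_S1)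
  have hi2 : Integrable f (P.map S2) := by
    rw [integrable_map_measure hf.aestronglyMeasurable cont_S2.measurable.aemeasurable]
    exact P_integrable hP _ (hf.comp cont_S2)
  have hi3 : Integrable f nuUnif := by
    refine Integrable.smul_measure ?_ (by simp : (5:ENNReal) ≠ ⊤)
    exact (hf.continuousOn.integrableOn_Icc : IntegrableOn f (Set.Icc (2/5:ℝ) (3/5)) volume)
  have e1 : ∫ x, f x ∂((1/3 : ENNReal) • P.map S1) = 1/3 * ∫ x, f (S1 x) ∂P := by
    rw [MeasureTheory.integral_smul_measure,
      integral_map cont_S1.measurable.aemeasurable hf.aestronglyMeasurable, ennToReal_third,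
      smul_eq_mul]
  have e2 : ∫ x, f x ∂((1/3 : ENNReal) • P.map S2) = 1/3 * ∫ x, f (S2 x) ∂P := by
    rw [MeasureTheory.integral_smul_measure,
      integral_map cont_S2.measurable.aemeasurable hf.aestronglyMeasurable, ennToReal_third,
      smul_eq_mul]
  have e3 : ∫ x, f x ∂((1/3 : ENNReal) • nuUnif) = 1/3 * (5 * ∫ x in (2/5:ℝ)..(3/5), f x) := by
    rw [MeasureTheory.integral_smul_measure, nu_integral f hf, ennToReal_third, smul_eq_mul]
  conv_lhs => rw [hP.2]
  rw [integral_add_measure ((hi1.smul_measure third_ne_top).add_measure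
        (hi2.smul_measure third_ne_top)) (hi3.smul_measure third_ne_top),
      integral_add_measure (hi1.smul_measure third_ne_top) (hi2.smul_measure third_ne_top),
      e1, e2, e3]

end Pfacts

end CondAux
namespace CondAux2
open CondAux intervalIntegral

lemma my_mul_min (c a b : ℝ) (hc : 0 ≤ c) : min (c*a) (c*b) = c * min a b := by
  rcases le_total a b with h | h
  · rw [min_eq_left (by nlinarith), min_eq_left h]
  · rw [min_eq_right (by nlinarith), min_eq_right h]

lemma sq_infDist_le {A : Set ℝ} (x b : ℝ) (hb : b ∈ A) :
    (Metric.infDist x A)^2 ≤ (x - b)^2 := by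
  have h1 : Metric.infDist x A ≤ |x - b| := by
    rw [← Real.dist_eq]
    exact Metric.infDist_le_dist_of_mem hb
  have h0 : (0:ℝ) ≤ Metric.infDist x A := Metric.infDist_nonneg
  calc (Metric.infDist x A)^2 ≤ |x - b|^2 := by nlinarith
  _ = (x - b)^2 := sq_abs _

lemma cont_infDist_sq (A : Set ℝ) : Continuous (fun x : ℝ => (Metric.infDist x A)^2) :=
  (Metric.continuous_infDist_pt A).pow 2

lemma distortion_nonneg (μ : Measure ℝ) (A : Set ℝ) : 0 ≤ distortion μ A :=
  integral_nonneg fun x => by positivity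

lemma quantErr_le {P : Measure ℝ} (n : ℕ) (β : Set ℝ) (hfin : β.Finite) (hne : β.Nonempty)
    (hcard : β.ncard ≤ n) : quantErr P n ≤ distortion P β := by
  apply csInf_le
  · refine ⟨0, ?_⟩
    rintro e ⟨γ, _, _, _, rfl⟩
    exact distortion_nonneg P γ
  · exact ⟨β, hfin, hne, hcard, rfl⟩

section Pfacts
variable {P : Measure ℝ} (hP : IsCondensation P nuUnif)
include hP

lemma I_le (f g : ℝ → ℝ) (hf : Continuous f) (hg : Continuous g)
    (h : ∀ y ∈ Set.Icc (0:ℝ) 1, f y ≤ g y) : ∫ x, f x ∂P ≤ ∫ x, g x ∂P :=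
  integral_mono_ae (P_integrable hP f hf) (P_integrable hP g hg) ((P_ae hP).mono h)

lemma P_int_id : ∫ x, x ∂P = 1/2 := by
  haveI := hP.1
  have h := P_eq hP (fun x => x) continuous_id
  have e1 : ∫ x, S1 x ∂P = (∫ x, x ∂P)/5 := by
    simp only [S1]
    exact MeasureTheory.integral_div (5:ℝ) (fun x => x)
  have e2 : ∫ x, S2 x ∂P = (∫ x, x ∂P)/5 + 4/5 := by
    simp only [S2]
    rw [MeasureTheory.integral_add (by exact (P_integrable hP _ (by fun_prop))) (integrable_const _)]
    rw [MeasureTheory.integral_div (5:ℝ) (fun x => x), MeasureTheory.integral_const]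
    simp
  have e3 : (∫ x in (2/5:ℝ)..(3/5), x) = 1/10 := by
    rw [integral_id]
    norm_num
  rw [e1, e2, e3] at h
  linarith

lemma P_int_sq : ∫ x, x^2 ∂P = 79/219 := by
  haveI := hP.1
  have h := P_eq hP (fun x => x^2) (by fun_prop)
  have e1 : ∫ x, (S1 x)^2 ∂P = (∫ x, x^2 ∂P)/25 := by
    have : (fun x => (S1 x)^2) = (fun x : ℝ => x^2/25) := by
      funext x; simp only [S1]; ring
    rw [this]
    exact MeasureTheory.integral_div (25:ℝ) (fun x => x^2)
  have e2 : ∫ x, (S2 x)^2 ∂P = (∫ x, x^2 ∂P)/25 + (8/25) * ∫ x, x ∂P + 16/25 := by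
    have : (fun x => (S2 x)^2) = (fun x : ℝ => x^2/25 + ((8/25)*x + 16/25)) := by
      funext x; simp only [S2]; ring
    rw [this]
    rw [MeasureTheory.integral_add (by exact P_integrable hP _ (by fun_prop))
      (by exact P_integrable hP _ (by fun_prop))]
    rw [MeasureTheory.integral_add (by exact P_integrable hP _ (by fun_prop)) (integrable_const _)]
    rw [MeasureTheory.integral_div (25:ℝ) (fun x => x^2), MeasureTheory.integral_const_mul, MeasureTheory.integral_const]
    simp only [Measure.real, measure_univ, ENNReal.toReal_one, smul_eq_mul, one_mul]
    ring
  have e3 : (∫ x in (2/5:ℝ)..(3/5), x^2) = 19/375 := by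
    rw [integral_pow]
    norm_num
  rw [e1, e2, e3, P_int_id hP] at h
  linarith

lemma P_int_affine_sq (a b : ℝ) : ∫ x, (a*x + b)^2 ∂P = 79/219*a^2 + a*b + b^2 := by
  haveI := hP.1
  have : (fun x => (a*x + b)^2) = (fun x : ℝ => a^2*x^2 + ((2*a*b)*x + b^2)) := by
    funext x; ring
  rw [this]
  rw [MeasureTheory.integral_add (by exact P_integrable hP _ (by fun_prop))
    (by exact P_integrable hP _ (by fun_prop))]
  rw [MeasureTheory.integral_add (by exact P_integrable hP _ (by fun_prop)) (integrable_const _)]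
  rw [MeasureTheory.integral_const_mul, MeasureTheory.integral_const_mul, P_int_sq hP, P_int_id hP, MeasureTheory.integral_const]
  simp only [Measure.real, measure_univ, ENNReal.toReal_one, smul_eq_mul, one_mul]
  ring

lemma distortion_decomp (A : Set ℝ) :
    distortion P A = 1/3 * (∫ x, (Metric.infDist (S1 x) A)^2 ∂P)
      + 1/3 * (∫ x, (Metric.infDist (S2 x) A)^2 ∂P)
      + 1/3 * (5 * ∫ x in (2/5:ℝ)..(3/5), (Metric.infDist x A)^2) :=
  P_eq hP _ (cont_infDist_sq A)

lemma UB3 (n : ℕ) (hn : 3 ≤ n) : quantErr P n ≤ 89/21900 := by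
  haveI := hP.1
  set β : Set ℝ := {1/10, 1/2, 9/10} with hβ
  have hfin : β.Finite := Set.toFinite β
  have hne : β.Nonempty := ⟨1/10, by simp [hβ]⟩
  have hcard : β.ncard ≤ n := by
    have h1 : β.ncard ≤ 2 + 1 := le_trans (Set.ncard_insert_le _ _)
      (by gcongr; exact le_trans (Set.ncard_insert_le _ _) (by simp [Set.ncard_singleton]))
    omega
  refine le_trans (quantErr_le n β hfin hne hcard) ?_
  rw [distortion_decomp hP]
  have m1 : (1/10 : ℝ) ∈ β := by simp [hβ]
  have m2 : (1/2 : ℝ) ∈ β := by simp [hβ]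
  have m3 : (9/10 : ℝ) ∈ β := by simp [hβ]
  have h1 : ∫ x, (Metric.infDist (S1 x) β)^2 ∂P ≤ 97/21900 := by
    have := I_le hP _ (fun x => ((1/5)*x + (-1/10))^2)
      ((cont_infDist_sq β).comp cont_S1) (by continuity)
      (fun y _ => by
        have := sq_infDist_le (S1 y) (1/10) m1
        simp only [S1] at this ⊢
        calc (Metric.infDist (y/5) β)^2 ≤ (y/5 - 1/10)^2 := this
        _ = ((1/5)*y + (-1/10))^2 := by ring)
    rw [P_int_affine_sq hP] at this
    calc ∫ x, (Metric.infDist (S1 x) β)^2 ∂P ≤ _ := this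
    _ ≤ 97/21900 := by norm_num
  have h2 : ∫ x, (Metric.infDist (S2 x) β)^2 ∂P ≤ 97/21900 := by
    have := I_le hP _ (fun x => ((1/5)*x + (-1/10))^2)
      ((cont_infDist_sq β).comp cont_S2) (by continuity)
      (fun y _ => by
        have := sq_infDist_le (S2 y) (9/10) m3
        simp only [S2] at this ⊢
        calc (Metric.infDist (y/5 + 4/5) β)^2 ≤ (y/5 + 4/5 - 9/10)^2 := this
        _ = ((1/5)*y + (-1/10))^2 := by ring)
    rw [P_int_affine_sq hP] at this
    calc ∫ x, (Metric.infDist (S2 x) β)^2 ∂P ≤ _ := this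
    _ ≤ 97/21900 := by norm_num
  have h3 : (∫ x in (2/5:ℝ)..(3/5), (Metric.infDist x β)^2) ≤ 1/1500 := by
    have := intervalIntegral.integral_mono_on (by norm_num : (2/5:ℝ) ≤ 3/5)
      ((cont_infDist_sq β).intervalIntegrable (2/5 : ℝ) (3/5) : IntervalIntegrable _ volume _ _)
      ((by fun_prop : Continuous (fun x : ℝ => (x - 1/2)^2)).intervalIntegrable (2/5 : ℝ) (3/5) : IntervalIntegrable _ volume _ _)
      (fun x _ => sq_infDist_le x (1/2) m2)
    rw [int_sq] at this
    calc (∫ x in (2/5:ℝ)..(3/5), (Metric.infDist x β)^2) ≤ _ := this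
    _ ≤ 1/1500 := by norm_num
  linarith

end Pfacts
end CondAux2
namespace CondAux2
open CondAux intervalIntegral

section Pfacts2
variable {P : Measure ℝ} (hP : IsCondensation P nuUnif)
include hP

lemma P_int_const (c : ℝ) : ∫ _, c ∂P = c := by
  haveI := hP.1
  rw [MeasureTheory.integral_const]
  simp

lemma IS1_le (A : Set ℝ) (p : ℝ) (hp : p ∈ A) :
    ∫ x, (Metric.infDist (S1 x) A)^2 ∂P ≤ 79/5475 - p/5 + p^2 := by
  have h := I_le hP _ (fun x => ((1/5)*x + (-p))^2)
    ((cont_infDist_sq A).comp cont_S1) (by fun_prop)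
    (fun y _ => by
      have := sq_infDist_le (S1 y) p hp
      simp only [S1] at this ⊢
      calc (Metric.infDist (y/5) A)^2 ≤ (y/5 - p)^2 := this
      _ = ((1/5)*y + (-p))^2 := by ring)
  rw [P_int_affine_sq hP] at h
  calc ∫ x, (Metric.infDist (S1 x) A)^2 ∂P ≤ _ := h
  _ = 79/5475 - p/5 + p^2 := by ring

lemma IS2_le (A : Set ℝ) (p : ℝ) (hp : p ∈ A) :
    ∫ x, (Metric.infDist (S2 x) A)^2 ∂P ≤ 79/5475 + (4/5-p)/5 + (4/5-p)^2 := by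
  have h := I_le hP _ (fun x => ((1/5)*x + (4/5-p))^2)
    ((cont_infDist_sq A).comp cont_S2) (by fun_prop)
    (fun y _ => by
      have := sq_infDist_le (S2 y) p hp
      simp only [S2] at this ⊢
      calc (Metric.infDist (y/5 + 4/5) A)^2 ≤ (y/5 + 4/5 - p)^2 := this
      _ = ((1/5)*y + (4/5-p))^2 := by ring)
  rw [P_int_affine_sq hP] at h
  calc ∫ x, (Metric.infDist (S2 x) A)^2 ∂P ≤ _ := h
  _ = 79/5475 + (4/5-p)/5 + (4/5-p)^2 := by ring

lemma UB4 (n : ℕ) (hn : 4 ≤ n) : quantErr P n ≤ 283/87600 := by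
  haveI := hP.1
  set β : Set ℝ := {1/10, 9/20, 11/20, 9/10} with hβ
  have hfin : β.Finite := Set.toFinite β
  have hne : β.Nonempty := ⟨1/10, by simp [hβ]⟩
  have hcard : β.ncard ≤ n := by
    refine le_trans (le_trans (Set.ncard_insert_le _ _) ?_) hn
    have h2 := Set.ncard_insert_le (9/20 : ℝ) {(11/20 : ℝ), 9/10}
    have h3 := Set.ncard_insert_le (11/20 : ℝ) {(9/10 : ℝ)}
    simp only [Set.ncard_singleton] at h2 h3
    omega
  refine le_trans (quantErr_le n β hfin hne hcard) ?_
  rw [distortion_decomp hP]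
  have h1 := IS1_le hP β (1/10) (by simp [hβ])
  have h2 := IS2_le hP β (9/10) (by simp [hβ])
  have h3 : (∫ x in (2/5:ℝ)..(3/5), (Metric.infDist x β)^2) ≤ 1/6000 := by
    have hsplit : (∫ x in (2/5:ℝ)..(3/5), (Metric.infDist x β)^2)
        = (∫ x in (2/5:ℝ)..(1/2:ℝ), (Metric.infDist x β)^2)
          + (∫ x in (1/2:ℝ)..(3/5:ℝ), (Metric.infDist x β)^2) :=
      (intervalIntegral.integral_add_adjacent_intervals
        ((cont_infDist_sq β).intervalIntegrable _ _)
        ((cont_infDist_sq β).intervalIntegrable _ _)).symm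
    have ha : (∫ x in (2/5:ℝ)..(1/2:ℝ), (Metric.infDist x β)^2) ≤ 1/12000 := by
      have := intervalIntegral.integral_mono_on (by norm_num : (2/5:ℝ) ≤ 1/2)
        ((cont_infDist_sq β).intervalIntegrable (2/5:ℝ) (1/2) : IntervalIntegrable _ volume _ _)
        ((by fun_prop : Continuous (fun x : ℝ => (x - 9/20)^2)).intervalIntegrable (2/5:ℝ) (1/2)
          : IntervalIntegrable _ volume _ _)
        (fun x _ => sq_infDist_le x (9/20) (by simp [hβ]))
      rw [int_sq] at this
      calc (∫ x in (2/5:ℝ)..(1/2:ℝ), (Metric.infDist x β)^2) ≤ _ := this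
      _ ≤ 1/12000 := by norm_num
    have hb : (∫ x in (1/2:ℝ)..(3/5:ℝ), (Metric.infDist x β)^2) ≤ 1/12000 := by
      have := intervalIntegral.integral_mono_on (by norm_num : (1/2:ℝ) ≤ 3/5)
        ((cont_infDist_sq β).intervalIntegrable (1/2:ℝ) (3/5) : IntervalIntegrable _ volume _ _)
        ((by fun_prop : Continuous (fun x : ℝ => (x - 11/20)^2)).intervalIntegrable (1/2:ℝ) (3/5)
          : IntervalIntegrable _ volume _ _)
        (fun x _ => sq_infDist_le x (11/20) (by simp [hβ]))
      rw [int_sq] at this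
      calc (∫ x in (1/2:ℝ)..(3/5:ℝ), (Metric.infDist x β)^2) ≤ _ := this
      _ ≤ 1/12000 := by norm_num
    rw [hsplit]; linarith
  have e1 : (79:ℝ)/5475 - (1/10)/5 + (1/10)^2 = 97/21900 := by norm_num
  have e2 : (79:ℝ)/5475 + (4/5-9/10)/5 + (4/5-9/10)^2 = 97/21900 := by norm_num
  rw [e1] at h1; rw [e2] at h2
  linarith

-- two-point inner bound
lemma Kbound : ∫ x, (min ((x - 13/60)^2) ((x - 47/60)^2)) ∂P ≤ 8003/262800 := by
  haveI := hP.1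
  have hf : Continuous (fun x : ℝ => min ((x - 13/60)^2) ((x - 47/60)^2)) := by fun_prop
  have h := P_eq hP _ hf
  have h1 : ∫ x, min ((S1 x - 13/60)^2) ((S1 x - 47/60)^2) ∂P ≤ 4741/262800 := by
    have hle := I_le hP _ (fun x => ((1/5)*x + (-13/60))^2)
      (hf.comp cont_S1) (by fun_prop)
      (fun y _ => by
        calc min ((S1 y - 13/60)^2) ((S1 y - 47/60)^2) ≤ (S1 y - 13/60)^2 := min_le_left _ _
        _ = ((1/5)*y + (-13/60))^2 := by unfold S1; ring)
    rw [P_int_affine_sq hP] at hle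
    calc ∫ x, min ((S1 x - 13/60)^2) ((S1 x - 47/60)^2) ∂P ≤ _ := hle
    _ ≤ 4741/262800 := by norm_num
  have h2 : ∫ x, min ((S2 x - 13/60)^2) ((S2 x - 47/60)^2) ∂P ≤ 4741/262800 := by
    have hle := I_le hP _ (fun x => ((1/5)*x + (1/60))^2)
      (hf.comp cont_S2) (by fun_prop)
      (fun y _ => by
        calc min ((S2 y - 13/60)^2) ((S2 y - 47/60)^2) ≤ (S2 y - 47/60)^2 := min_le_right _ _
        _ = ((1/5)*y + (1/60))^2 := by unfold S2; ring)
    rw [P_int_affine_sq hP] at hle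
    calc ∫ x, min ((S2 x - 13/60)^2) ((S2 x - 47/60)^2) ∂P ≤ _ := hle
    _ ≤ 4741/262800 := by norm_num
  have h3 : (∫ x in (2/5:ℝ)..(3/5), min ((x - 13/60)^2) ((x - 47/60)^2)) ≤ 199/18000 := by
    have hsplit : (∫ x in (2/5:ℝ)..(3/5), min ((x - 13/60)^2) ((x - 47/60)^2))
        = (∫ x in (2/5:ℝ)..(1/2:ℝ), min ((x - 13/60)^2) ((x - 47/60)^2))
          + (∫ x in (1/2:ℝ)..(3/5:ℝ), min ((x - 13/60)^2) ((x - 47/60)^2)) :=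
      (intervalIntegral.integral_add_adjacent_intervals
        (hf.intervalIntegrable _ _) (hf.intervalIntegrable _ _)).symm
    have ha : (∫ x in (2/5:ℝ)..(1/2:ℝ), min ((x - 13/60)^2) ((x - 47/60)^2)) ≤ 597/108000 := by
      have := intervalIntegral.integral_mono_on (by norm_num : (2/5:ℝ) ≤ 1/2)
        (hf.intervalIntegrable (2/5:ℝ) (1/2) : IntervalIntegrable _ volume _ _)
        ((by fun_prop : Continuous (fun x : ℝ => (x - 13/60)^2)).intervalIntegrable (2/5:ℝ) (1/2)
          : IntervalIntegrable _ volume _ _)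
        (fun x _ => min_le_left _ _)
      rw [int_sq] at this
      calc (∫ x in (2/5:ℝ)..(1/2:ℝ), min ((x - 13/60)^2) ((x - 47/60)^2)) ≤ _ := this
      _ ≤ 597/108000 := by norm_num
    have hb : (∫ x in (1/2:ℝ)..(3/5:ℝ), min ((x - 13/60)^2) ((x - 47/60)^2)) ≤ 597/108000 := by
      have := intervalIntegral.integral_mono_on (by norm_num : (1/2:ℝ) ≤ 3/5)
        (hf.intervalIntegrable (1/2:ℝ) (3/5) : IntervalIntegrable _ volume _ _)
        ((by fun_prop : Continuous (fun x : ℝ => (x - 47/60)^2)).intervalIntegrable (1/2:ℝ) (3/5)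
          : IntervalIntegrable _ volume _ _)
        (fun x _ => min_le_right _ _)
      rw [int_sq] at this
      calc (∫ x in (1/2:ℝ)..(3/5:ℝ), min ((x - 13/60)^2) ((x - 47/60)^2)) ≤ _ := this
      _ ≤ 597/108000 := by norm_num
    rw [hsplit]; linarith
  rw [h]
  linarith

end Pfacts2
end CondAux2
namespace CondAux2
open CondAux intervalIntegral

section Pfacts3
variable {P : Measure ℝ} (hP : IsCondensation P nuUnif)
include hP

lemma UB56 (n : ℕ) (hn : 5 ≤ n) :
    quantErr P n ≤ if 6 ≤ n then 21481/19710000 else 18953/9855000 := by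
  haveI := hP.1
  have hmin : Continuous (fun x : ℝ => min ((x - 13/60)^2) ((x - 47/60)^2)) := by fun_prop
  -- the set: two scaled points in each of J1 J2, plus 1 or 2 points in C
  set γ : Set ℝ := if 6 ≤ n then {9/20, 11/20} else {(1/2 : ℝ)} with hγ
  set β : Set ℝ := {13/300, 47/300, 253/300, 287/300} ∪ γ with hβ
  have hγfin : γ.Finite := by
    rcases le_or_gt 6 n with h | h
    · rw [hγ, if_pos h]; exact Set.toFinite _
    · rw [hγ, if_neg (by omega)]; exact Set.toFinite _
  have hfin : β.Finite := (Set.toFinite _).union hγfin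
  have hne : β.Nonempty := ⟨13/300, by simp [hβ]⟩
  have hγcard : γ.ncard + 4 ≤ n := by
    rcases le_or_gt 6 n with h | h
    · have : γ.ncard ≤ 2 := by
        rw [hγ, if_pos h]
        exact le_trans (Set.ncard_insert_le _ _) (by simp [Set.ncard_singleton])
      omega
    · have : γ.ncard = 1 := by
        rw [hγ, if_neg (by omega)]
        simp [Set.ncard_singleton]
      omega
  have hcard : β.ncard ≤ n := by
    have h4 : ({13/300, 47/300, 253/300, 287/300} : Set ℝ).ncard ≤ 4 := by
      have a1 := Set.ncard_insert_le (13/300 : ℝ) {(47/300:ℝ), 253/300, 287/300}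
      have a2 := Set.ncard_insert_le (47/300 : ℝ) {(253/300:ℝ), 287/300}
      have a3 := Set.ncard_insert_le (253/300 : ℝ) {(287/300:ℝ)}
      simp only [Set.ncard_singleton] at a1 a2 a3
      omega
    have := Set.ncard_union_le ({13/300, 47/300, 253/300, 287/300} : Set ℝ) γ
    rw [hβ]
    omega
  refine le_trans (quantErr_le n β hfin hne hcard) ?_
  rw [distortion_decomp hP]
  have m1 : (13/300 : ℝ) ∈ β := by simp [hβ]
  have m2 : (47/300 : ℝ) ∈ β := by simp [hβ]
  have m3 : (253/300 : ℝ) ∈ β := by simp [hβ]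
  have m4 : (287/300 : ℝ) ∈ β := by simp [hβ]
  have h1 : ∫ x, (Metric.infDist (S1 x) β)^2 ∂P ≤ (1/25) * (8003/262800) := by
    have hle := I_le hP _ (fun x => (1/25) * min ((x - 13/60)^2) ((x - 47/60)^2))
      ((cont_infDist_sq β).comp cont_S1) (by fun_prop)
      (fun y _ => by
        have e : (1/25) * min ((y - 13/60)^2) ((y - 47/60)^2)
            = min ((S1 y - 13/300)^2) ((S1 y - 47/300)^2) := by
          rw [show (S1 y - 13/300)^2 = (1/25) * ((y - 13/60)^2) by unfold S1; ring,
              show (S1 y - 47/300)^2 = (1/25) * ((y - 47/60)^2) by unfold S1; ring,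
              my_mul_min _ _ _ (by norm_num)]
        show (Metric.infDist (S1 y) β)^2 ≤ (1/25) * min ((y - 13/60)^2) ((y - 47/60)^2)
        rw [e]
        exact le_min (sq_infDist_le _ _ m1) (sq_infDist_le _ _ m2))
    rw [MeasureTheory.integral_const_mul] at hle
    exact le_trans hle (by
      have := Kbound hP
      nlinarith)
  have h2 : ∫ x, (Metric.infDist (S2 x) β)^2 ∂P ≤ (1/25) * (8003/262800) := by
    have hle := I_le hP _ (fun x => (1/25) * min ((x - 13/60)^2) ((x - 47/60)^2))
      ((cont_infDist_sq β).comp cont_S2) (by fun_prop)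
      (fun y _ => by
        have e : (1/25) * min ((y - 13/60)^2) ((y - 47/60)^2)
            = min ((S2 y - 253/300)^2) ((S2 y - 287/300)^2) := by
          rw [show (S2 y - 253/300)^2 = (1/25) * ((y - 13/60)^2) by unfold S2; ring,
              show (S2 y - 287/300)^2 = (1/25) * ((y - 47/60)^2) by unfold S2; ring,
              my_mul_min _ _ _ (by norm_num)]
        show (Metric.infDist (S2 y) β)^2 ≤ (1/25) * min ((y - 13/60)^2) ((y - 47/60)^2)
        rw [e]
        exact le_min (sq_infDist_le _ _ m3) (sq_infDist_le _ _ m4))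
    rw [MeasureTheory.integral_const_mul] at hle
    exact le_trans hle (by
      have := Kbound hP
      nlinarith)
  rcases le_or_gt 6 n with h6 | h6
  · rw [if_pos h6]
    have mγ1 : (9/20 : ℝ) ∈ β := by
      rw [hβ, hγ, if_pos h6]; simp
    have mγ2 : (11/20 : ℝ) ∈ β := by
      rw [hβ, hγ, if_pos h6]; simp
    have h3 : (∫ x in (2/5:ℝ)..(3/5), (Metric.infDist x β)^2) ≤ 1/6000 := by
      have hsplit : (∫ x in (2/5:ℝ)..(3/5), (Metric.infDist x β)^2)
          = (∫ x in (2/5:ℝ)..(1/2:ℝ), (Metric.infDist x β)^2)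
            + (∫ x in (1/2:ℝ)..(3/5:ℝ), (Metric.infDist x β)^2) :=
        (intervalIntegral.integral_add_adjacent_intervals
          ((cont_infDist_sq β).intervalIntegrable _ _)
          ((cont_infDist_sq β).intervalIntegrable _ _)).symm
      have ha : (∫ x in (2/5:ℝ)..(1/2:ℝ), (Metric.infDist x β)^2) ≤ 1/12000 := by
        have := intervalIntegral.integral_mono_on (by norm_num : (2/5:ℝ) ≤ 1/2)
          ((cont_infDist_sq β).intervalIntegrable (2/5:ℝ) (1/2) : IntervalIntegrable _ volume _ _)
          ((by fun_prop : Continuous (fun x : ℝ => (x - 9/20)^2)).intervalIntegrable (2/5:ℝ) (1/2)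
            : IntervalIntegrable _ volume _ _)
          (fun x _ => sq_infDist_le x (9/20) mγ1)
        rw [int_sq] at this
        calc (∫ x in (2/5:ℝ)..(1/2:ℝ), (Metric.infDist x β)^2) ≤ _ := this
        _ ≤ 1/12000 := by norm_num
      have hb : (∫ x in (1/2:ℝ)..(3/5:ℝ), (Metric.infDist x β)^2) ≤ 1/12000 := by
        have := intervalIntegral.integral_mono_on (by norm_num : (1/2:ℝ) ≤ 3/5)
          ((cont_infDist_sq β).intervalIntegrable (1/2:ℝ) (3/5) : IntervalIntegrable _ volume _ _)
          ((by fun_prop : Continuous (fun x : ℝ => (x - 11/20)^2)).intervalIntegrable (1/2:ℝ) (3/5)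
            : IntervalIntegrable _ volume _ _)
          (fun x _ => sq_infDist_le x (11/20) mγ2)
        rw [int_sq] at this
        calc (∫ x in (1/2:ℝ)..(3/5:ℝ), (Metric.infDist x β)^2) ≤ _ := this
        _ ≤ 1/12000 := by norm_num
      rw [hsplit]; linarith
    linarith
  · rw [if_neg (by omega)]
    have mγ : (1/2 : ℝ) ∈ β := by
      rw [hβ, hγ, if_neg (by omega)]; simp
    have h3 : (∫ x in (2/5:ℝ)..(3/5), (Metric.infDist x β)^2) ≤ 1/1500 := by
      have := intervalIntegral.integral_mono_on (by norm_num : (2/5:ℝ) ≤ 3/5)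
        ((cont_infDist_sq β).intervalIntegrable (2/5:ℝ) (3/5) : IntervalIntegrable _ volume _ _)
        ((by fun_prop : Continuous (fun x : ℝ => (x - 1/2)^2)).intervalIntegrable (2/5:ℝ) (3/5)
          : IntervalIntegrable _ volume _ _)
        (fun x _ => sq_infDist_le x (1/2) mγ)
      rw [int_sq] at this
      calc (∫ x in (2/5:ℝ)..(3/5), (Metric.infDist x β)^2) ≤ _ := this
      _ ≤ 1/1500 := by norm_num
    linarith

lemma UB5 (n : ℕ) (hn : 5 ≤ n) : quantErr P n ≤ 18953/9855000 := by
  have h := UB56 hP n hn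
  rcases le_or_gt 6 n with h6 | h6
  · rw [if_pos h6] at h; calc quantErr P n ≤ _ := h
    _ ≤ 18953/9855000 := by norm_num
  · rwa [if_neg (by omega)] at h

lemma UB6 (n : ℕ) (hn : 6 ≤ n) : quantErr P n ≤ 21481/19710000 := by
  have h := UB56 hP n (by omega)
  rwa [if_pos hn] at h

end Pfacts3
end CondAux2
namespace CondAux2
open CondAux intervalIntegral

lemma polyA (t : ℝ) (ha : 3/10 ≤ t) (hb : t ≤ 1/2) :
    2/25 ≤ 1/3*((79:ℝ)/219*(-1/5)^2 + (-1/5)*t + t^2) + 1/3*(((4:ℝ)/5 - t)^2)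
      + 1/3*(5*((((3/5:ℝ) - t)^3 - ((2/5:ℝ) - t)^3)/3)) := by
  nlinarith [sq_nonneg (t - 7/15)]

lemma polyB (t : ℝ) (ha : 1/2 ≤ t) (hb : t ≤ 7/10) :
    2/25 ≤ 1/3*((79:ℝ)/219*(1/5)^2 + (1/5)*(4/5 - t) + (4/5 - t)^2) + 1/3*((t - (1:ℝ)/5)^2)
      + 1/3*(5*((((3/5:ℝ) - t)^3 - ((2/5:ℝ) - t)^3)/3)) := by
  nlinarith [sq_nonneg (t - 8/15)]

section Pfacts4
variable {P : Measure ℝ} (hP : IsCondensation P nuUnif)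
include hP

set_option maxHeartbeats 1000000 in
lemma G1 (t : ℝ) : 2/25 ≤ ∫ x, (min |x - t| (1/2))^2 ∂P := by
  haveI := hP.1
  have hf : Continuous (fun x : ℝ => (min |x - t| (1/2))^2) := by fun_prop
  have h := P_eq hP _ hf
  have hI1nn : 0 ≤ ∫ x, (min |S1 x - t| (1/2))^2 ∂P :=
    MeasureTheory.integral_nonneg fun x => by positivity
  have hI2nn : 0 ≤ ∫ x, (min |S2 x - t| (1/2))^2 ∂P :=
    MeasureTheory.integral_nonneg fun x => by positivity
  have hInn : 0 ≤ ∫ x in (2/5:ℝ)..(3/5), (min |x - t| (1/2))^2 :=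
    intervalIntegral.integral_nonneg (by norm_num) (fun x _ => by positivity)
  rcases le_total t (3/10) with ht1 | ht1
  · have h2 : (1/4:ℝ) ≤ ∫ x, (min |S2 x - t| (1/2))^2 ∂P := by
      have hh := I_le hP (fun _ => (1/4:ℝ)) _ continuous_const (hf.comp cont_S2)
        (fun y hy => by
          show (1/4:ℝ) ≤ (min |S2 y - t| (1/2))^2
          have habs : (1/2:ℝ) ≤ |S2 y - t| := by
            rw [abs_of_nonneg (by unfold S2; linarith [hy.1] : (0:ℝ) ≤ S2 y - t)]
            unfold S2; linarith [hy.1]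
          rw [min_eq_right (by linarith)]
          norm_num)
      rwa [P_int_const hP] at hh
    linarith
  rcases le_total (7/10) t with ht2 | ht2
  · have h1 : (1/4:ℝ) ≤ ∫ x, (min |S1 x - t| (1/2))^2 ∂P := by
      have hh := I_le hP (fun _ => (1/4:ℝ)) _ continuous_const (hf.comp cont_S1)
        (fun y hy => by
          show (1/4:ℝ) ≤ (min |S1 y - t| (1/2))^2
          have habs : (1/2:ℝ) ≤ |S1 y - t| := by
            rw [abs_of_nonpos (by unfold S1; linarith [hy.2] : S1 y - t ≤ 0)]
            unfold S1; linarith [hy.2]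
          rw [min_eq_right (by linarith)]
          norm_num)
      rwa [P_int_const hP] at hh
    linarith
  · rcases le_total t (1/2) with ht3 | ht3
    · -- t ∈ [3/10, 1/2]
      have h1 : (79:ℝ)/219*(-1/5)^2 + (-1/5)*t + t^2 ≤ ∫ x, (min |S1 x - t| (1/2))^2 ∂P := by
        have hh := I_le hP (fun x => ((-1/5)*x + t)^2) _ (by fun_prop) (hf.comp cont_S1)
          (fun y hy => by
            show ((-1/5)*y + t)^2 ≤ (min |S1 y - t| (1/2))^2
            have e1 : |S1 y - t| = t - y/5 := by
              rw [abs_of_nonpos (by unfold S1; linarith [hy.2] : S1 y - t ≤ 0)]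
              unfold S1; ring
            rw [e1, min_eq_left (by linarith [hy.1])]
            have e2 : (-1/5)*y + t = t - y/5 := by ring
            rw [e2])
        rwa [P_int_affine_sq hP] at hh
      have h2 : ((4:ℝ)/5 - t)^2 ≤ ∫ x, (min |S2 x - t| (1/2))^2 ∂P := by
        have hh := I_le hP (fun _ => ((4:ℝ)/5 - t)^2) _ continuous_const (hf.comp cont_S2)
          (fun y hy => by
            show ((4:ℝ)/5 - t)^2 ≤ (min |S2 y - t| (1/2))^2
            have hge : (4:ℝ)/5 - t ≤ min |S2 y - t| (1/2) := by
              refine le_min ?_ (by linarith)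
              rw [abs_of_nonneg (by unfold S2; linarith [hy.1] : (0:ℝ) ≤ S2 y - t)]
              unfold S2; linarith [hy.1]
            have h0 : (0:ℝ) ≤ 4/5 - t := by linarith
            exact pow_le_pow_left₀ h0 hge 2)
        rwa [P_int_const hP] at hh
      have h3 : (((3/5:ℝ) - t)^3 - ((2/5:ℝ) - t)^3)/3
          ≤ ∫ x in (2/5:ℝ)..(3/5), (min |x - t| (1/2))^2 := by
        have hh := intervalIntegral.integral_mono_on (by norm_num : (2/5:ℝ) ≤ 3/5)
          ((by fun_prop : Continuous (fun x : ℝ => (x - t)^2)).intervalIntegrable (2/5:ℝ) (3/5)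
            : IntervalIntegrable _ volume _ _)
          (hf.intervalIntegrable (2/5:ℝ) (3/5) : IntervalIntegrable _ volume _ _)
          (fun x hx => by
            show (x - t)^2 ≤ (min |x - t| (1/2))^2
            have : min |x - t| (1/2) = |x - t| := by
              apply min_eq_left
              rw [abs_le]
              constructor <;> [linarith [hx.1]; linarith [hx.2]]
            rw [this, sq_abs])
        rw [int_sq] at hh
        exact hh
      rw [h]
      have hp := polyA t ht1 ht3
      linarith
    · -- t ∈ [1/2, 7/10]
      have h2 : (79:ℝ)/219*(1/5)^2 + (1/5)*(4/5 - t) + (4/5 - t)^2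
          ≤ ∫ x, (min |S2 x - t| (1/2))^2 ∂P := by
        have hh := I_le hP (fun x => ((1/5)*x + (4/5 - t))^2) _ (by fun_prop) (hf.comp cont_S2)
          (fun y hy => by
            show ((1/5)*y + (4/5 - t))^2 ≤ (min |S2 y - t| (1/2))^2
            have e1 : |S2 y - t| = y/5 + 4/5 - t := by
              rw [abs_of_nonneg (by unfold S2; linarith [hy.1] : (0:ℝ) ≤ S2 y - t)]
              unfold S2; ring
            rw [e1, min_eq_left (by linarith [hy.2])]
            have e2 : (1/5)*y + (4/5 - t) = y/5 + 4/5 - t := by ring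
            rw [e2])
        rwa [P_int_affine_sq hP] at hh
      have h1 : (t - (1:ℝ)/5)^2 ≤ ∫ x, (min |S1 x - t| (1/2))^2 ∂P := by
        have hh := I_le hP (fun _ => (t - (1:ℝ)/5)^2) _ continuous_const (hf.comp cont_S1)
          (fun y hy => by
            show (t - (1:ℝ)/5)^2 ≤ (min |S1 y - t| (1/2))^2
            have hge : t - 1/5 ≤ min |S1 y - t| (1/2) := by
              refine le_min ?_ (by linarith)
              rw [abs_of_nonpos (by unfold S1; linarith [hy.2] : S1 y - t ≤ 0)]
              unfold S1; linarith [hy.2]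
            have h0 : (0:ℝ) ≤ t - 1/5 := by linarith
            exact pow_le_pow_left₀ h0 hge 2)
        rwa [P_int_const hP] at hh
      have h3 : (((3/5:ℝ) - t)^3 - ((2/5:ℝ) - t)^3)/3
          ≤ ∫ x in (2/5:ℝ)..(3/5), (min |x - t| (1/2))^2 := by
        have hh := intervalIntegral.integral_mono_on (by norm_num : (2/5:ℝ) ≤ 3/5)
          ((by fun_prop : Continuous (fun x : ℝ => (x - t)^2)).intervalIntegrable (2/5:ℝ) (3/5)
            : IntervalIntegrable _ volume _ _)
          (hf.intervalIntegrable (2/5:ℝ) (3/5) : IntervalIntegrable _ volume _ _)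
          (fun x hx => by
            show (x - t)^2 ≤ (min |x - t| (1/2))^2
            have : min |x - t| (1/2) = |x - t| := by
              apply min_eq_left
              rw [abs_le]
              constructor <;> [linarith [hx.1]; linarith [hx.2]]
            rw [this, sq_abs])
        rw [int_sq] at hh
        exact hh
      rw [h]
      have hp := polyB t ht3 ht2
      linarith

end Pfacts4
end CondAux2
namespace CondAux2
open CondAux intervalIntegral

lemma le_infDist_of (A : Set ℝ) (hne : A.Nonempty) (x c : ℝ) (h : ∀ a ∈ A, c ≤ |x - a|) :
    c ≤ Metric.infDist x A := by
  by_contra hcon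
  obtain ⟨a, ha, hd⟩ := (Metric.infDist_lt_iff hne).mp (not_le.mp hcon)
  rw [Real.dist_eq] at hd
  exact absurd (h a ha) (not_le.mpr hd)

lemma sq_le_infDist_sq (A : Set ℝ) (hne : A.Nonempty) (x c : ℝ) (hc : 0 ≤ c)
    (h : ∀ a ∈ A, c ≤ |x - a|) : c^2 ≤ (Metric.infDist x A)^2 :=
  pow_le_pow_left₀ hc (le_infDist_of A hne x c h) 2

section Pfacts5
variable {P : Measure ℝ} (hP : IsCondensation P nuUnif)
include hP

-- J1 atom: all points ≥ 1/5 ⇒ big cost on the left piece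
lemma atomJ1_far (A : Set ℝ) (hne : A.Nonempty) (h : ∀ a ∈ A, 1/5 ≤ a) :
    79/5475 ≤ ∫ x, (Metric.infDist (S1 x) A)^2 ∂P := by
  have hh := I_le hP (fun x => ((-1/5)*x + 1/5)^2) _ (by fun_prop)
    ((cont_infDist_sq A).comp cont_S1)
    (fun y hy => by
      show ((-1/5)*y + 1/5)^2 ≤ (Metric.infDist (S1 y) A)^2
      refine sq_le_infDist_sq A hne _ _ (by linarith [hy.2]) (fun a ha => ?_)
      have h1 := h a ha
      rw [abs_of_nonpos (by unfold S1; linarith [hy.2] : S1 y - a ≤ 0)]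
      unfold S1; linarith [hy.2])
  rwa [P_int_affine_sq hP, show (79:ℝ)/219*(-1/5)^2 + (-1/5)*(1/5) + (1/5)^2 = 79/5475 by norm_num]
    at hh

lemma atomJ2_far (A : Set ℝ) (hne : A.Nonempty) (h : ∀ a ∈ A, a ≤ 4/5) :
    79/5475 ≤ ∫ x, (Metric.infDist (S2 x) A)^2 ∂P := by
  have hh := I_le hP (fun x => ((1/5)*x + 0)^2) _ (by fun_prop)
    ((cont_infDist_sq A).comp cont_S2)
    (fun y hy => by
      show ((1/5)*y + 0)^2 ≤ (Metric.infDist (S2 y) A)^2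
      refine sq_le_infDist_sq A hne _ _ (by linarith [hy.1]) (fun a ha => ?_)
      have h1 := h a ha
      rw [abs_of_nonneg (by unfold S2; linarith [hy.1] : (0:ℝ) ≤ S2 y - a)]
      unfold S2; linarith [hy.1])
  rwa [P_int_affine_sq hP, show (79:ℝ)/219*(1/5)^2 + (1/5)*0 + 0^2 = 79/5475 by norm_num] at hh

-- J1 atom with one free point
lemma atomJ1_1 (A : Set ℝ) (hne : A.Nonempty) (u : ℝ)
    (h : ∀ a ∈ A, a ≤ 3/10 → a = u) :
    2/625 ≤ ∫ x, (Metric.infDist (S1 x) A)^2 ∂P := by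
  have hh := I_le hP (fun x => (1/25) * (min |x - 5*u| (1/2))^2) _ (by fun_prop)
    ((cont_infDist_sq A).comp cont_S1)
    (fun y hy => by
      show (1/25) * (min |y - 5*u| (1/2))^2 ≤ (Metric.infDist (S1 y) A)^2
      have e : (1/25) * (min |y - 5*u| (1/2))^2 = ((1/5) * min |y - 5*u| (1/2))^2 := by ring
      rw [e]
      refine sq_le_infDist_sq A hne _ _ (by positivity) (fun a ha => ?_)
      rcases le_or_gt a (3/10) with hc | hc
      · have hau := h a ha hc
        subst hau
        have e2 : |S1 y - a| = (1/5) * |y - 5*a| := by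
          rw [show S1 y - a = (y - 5*a)/5 by unfold S1; ring, abs_div]
          rw [abs_of_pos (by norm_num : (0:ℝ) < 5)]
          ring
        rw [e2]
        have : min |y - 5*a| (1/2) ≤ |y - 5*a| := min_le_left _ _
        linarith
      · have : (1/5:ℝ) * min |y - 5*u| (1/2) ≤ 1/10 := by
          have := min_le_right |y - 5*u| (1/2:ℝ)
          linarith
        have h2 : (1/10:ℝ) ≤ |S1 y - a| := by
          rw [abs_of_nonpos (by unfold S1; linarith [hy.2] : S1 y - a ≤ 0)]
          unfold S1; linarith [hy.2]
        linarith)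
  rw [MeasureTheory.integral_const_mul] at hh
  simp only [Function.comp_apply] at hh
  have hg := G1 hP (5*u)
  nlinarith

lemma atomJ2_1 (A : Set ℝ) (hne : A.Nonempty) (w : ℝ)
    (h : ∀ a ∈ A, 7/10 ≤ a → a = w) :
    2/625 ≤ ∫ x, (Metric.infDist (S2 x) A)^2 ∂P := by
  have hh := I_le hP (fun x => (1/25) * (min |x - (5*w - 4)| (1/2))^2) _ (by fun_prop)
    ((cont_infDist_sq A).comp cont_S2)
    (fun y hy => by
      show (1/25) * (min |y - (5*w - 4)| (1/2))^2 ≤ (Metric.infDist (S2 y) A)^2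
      have e : (1/25) * (min |y - (5*w - 4)| (1/2))^2
          = ((1/5) * min |y - (5*w - 4)| (1/2))^2 := by ring
      rw [e]
      refine sq_le_infDist_sq A hne _ _ (by positivity) (fun a ha => ?_)
      rcases le_or_gt (7/10) a with hc | hc
      · have hau := h a ha hc
        subst hau
        have e2 : |S2 y - a| = (1/5) * |y - (5*a - 4)| := by
          rw [show S2 y - a = (y - (5*a - 4))/5 by unfold S2; ring, abs_div]
          rw [abs_of_pos (by norm_num : (0:ℝ) < 5)]
          ring
        rw [e2]
        have : min |y - (5*a - 4)| (1/2) ≤ |y - (5*a - 4)| := min_le_left _ _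
        linarith
      · have : (1/5:ℝ) * min |y - (5*w - 4)| (1/2) ≤ 1/10 := by
          have := min_le_right |y - (5*w - 4)| (1/2:ℝ)
          linarith
        have h2 : (1/10:ℝ) ≤ |S2 y - a| := by
          rw [abs_of_nonneg (by unfold S2; linarith [hy.1] : (0:ℝ) ≤ S2 y - a)]
          unfold S2; linarith [hy.1]
        linarith)
  rw [MeasureTheory.integral_const_mul] at hh
  simp only [Function.comp_apply] at hh
  have hg := G1 hP (5*w - 4)
  nlinarith

end Pfacts5

-- the C flank atom (volume integral only, no hP needed)
lemma atomC (A : Set ℝ) (hne : A.Nonempty) (a b : ℝ) (ha1 : 1/5 ≤ a) (ha2 : a ≤ 2/5)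
    (hb1 : 3/5 ≤ b) (hb2 : b ≤ 4/5) (h : ∀ p ∈ A, p ≤ a ∨ b ≤ p) :
    (((a+b)/2 - a)^3 - (2/5 - a)^3)/3 + ((b - (a+b)/2)^3 - (b - 3/5)^3)/3
      ≤ ∫ x in (2/5:ℝ)..(3/5), (Metric.infDist x A)^2 := by
  have hm1 : (2/5:ℝ) ≤ (a+b)/2 := by linarith
  have hm2 : (a+b)/2 ≤ (3/5:ℝ) := by linarith
  have hsplit : (∫ x in (2/5:ℝ)..(3/5), (Metric.infDist x A)^2)
      = (∫ x in (2/5:ℝ)..((a+b)/2), (Metric.infDist x A)^2)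
        + (∫ x in ((a+b)/2)..(3/5:ℝ), (Metric.infDist x A)^2) :=
    (intervalIntegral.integral_add_adjacent_intervals
      ((cont_infDist_sq A).intervalIntegrable _ _)
      ((cont_infDist_sq A).intervalIntegrable _ _)).symm
  have hL : (((a+b)/2 - a)^3 - (2/5 - a)^3)/3
      ≤ ∫ x in (2/5:ℝ)..((a+b)/2), (Metric.infDist x A)^2 := by
    have hh := intervalIntegral.integral_mono_on hm1
      ((by fun_prop : Continuous (fun x : ℝ => (x - a)^2)).intervalIntegrable (2/5:ℝ) ((a+b)/2)
        : IntervalIntegrable _ volume _ _)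
      ((cont_infDist_sq A).intervalIntegrable (2/5:ℝ) ((a+b)/2) : IntervalIntegrable _ volume _ _)
      (fun x hx => by
        show (x - a)^2 ≤ (Metric.infDist x A)^2
        refine sq_le_infDist_sq A hne _ _ (by linarith [hx.1]) (fun p hp => ?_)
        rcases h p hp with hl | hr
        · rw [abs_of_nonneg (by linarith [hx.1] : (0:ℝ) ≤ x - p)]
          linarith
        · rw [abs_of_nonpos (by linarith [hx.2] : x - p ≤ 0)]
          linarith [hx.2])
    rwa [int_sq] at hh
  have hR : ((b - (a+b)/2)^3 - (b - 3/5)^3)/3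
      ≤ ∫ x in ((a+b)/2)..(3/5:ℝ), (Metric.infDist x A)^2 := by
    have hh := intervalIntegral.integral_mono_on hm2
      ((by fun_prop : Continuous (fun x : ℝ => (x - b)^2)).intervalIntegrable ((a+b)/2) (3/5:ℝ)
        : IntervalIntegrable _ volume _ _)
      ((cont_infDist_sq A).intervalIntegrable ((a+b)/2) (3/5:ℝ) : IntervalIntegrable _ volume _ _)
      (fun x hx => by
        show (x - b)^2 ≤ (Metric.infDist x A)^2
        rw [show (x - b)^2 = (b - x)^2 by ring]
        refine sq_le_infDist_sq A hne x (b - x) (by linarith [hx.2]) (fun p hp => ?_)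
        · rcases h p hp with hl | hr
          · rw [abs_of_nonneg (by linarith [hx.1] : (0:ℝ) ≤ x - p)]
            linarith [hx.1]
          · rw [abs_of_nonpos (by linarith [hx.2] : x - p ≤ 0)]
            linarith
        )
    rw [int_sq] at hh
    calc ((b - (a+b)/2)^3 - (b - 3/5)^3)/3 = (((3/5:ℝ) - b)^3 - ((a+b)/2 - b)^3)/3 := by ring
    _ ≤ _ := hh
  rw [hsplit]
  linarith

end CondAux2
namespace CondAux2
open CondAux intervalIntegral

section Pfacts6
variable {P : Measure ℝ} (hP : IsCondensation P nuUnif)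
include hP

lemma P_Icc01 : P (Set.Icc (0:ℝ) 1) = 1 := by
  haveI := hP.1
  have hc : P ((Set.Icc (0:ℝ) 1)ᶜ) = 0 := by
    have := P_ae hP
    rw [ae_iff] at this
    exact this
  have := measure_add_measure_compl (μ := P) (measurableSet_Icc (a := (0:ℝ)) (b := 1))
  rw [hc, add_zero] at this
  rw [this, measure_univ]

lemma P_piece_ge (s : Set ℝ) (hs : MeasurableSet s) :
    1/3 * P (S1 ⁻¹' s) ≤ P s := by
  have h1 : P s = 1/3 * (P.map S1) s + 1/3 * (P.map S2) s + 1/3 * nuUnif s := by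
    conv_lhs => rw [hP.2]
    simp [Measure.add_apply, Measure.smul_apply, smul_eq_mul]
  rw [h1, Measure.map_apply cont_S1.measurable hs]
  calc 1/3 * P (S1 ⁻¹' s) ≤ 1/3 * P (S1 ⁻¹' s) + (1/3 * (P.map S2) s + 1/3 * nuUnif s) :=
    le_add_of_nonneg_right zero_le
  _ = 1/3 * P (S1 ⁻¹' s) + 1/3 * (P.map S2) s + 1/3 * nuUnif s := by ring

lemma P_piece_ge2 (s : Set ℝ) (hs : MeasurableSet s) :
    1/3 * P (S2 ⁻¹' s) ≤ P s := by
  have h1 : P s = 1/3 * (P.map S1) s + 1/3 * (P.map S2) s + 1/3 * nuUnif s := by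
    conv_lhs => rw [hP.2]
    simp [Measure.add_apply, Measure.smul_apply, smul_eq_mul]
  rw [h1, Measure.map_apply cont_S2.measurable hs]
  calc 1/3 * P (S2 ⁻¹' s) ≤ (1/3 * (P.map S1) s + 1/3 * nuUnif s) + 1/3 * P (S2 ⁻¹' s) :=
    le_add_of_nonneg_left zero_le
  _ = 1/3 * (P.map S1) s + 1/3 * P (S2 ⁻¹' s) + 1/3 * nuUnif s := by ring

lemma P_pos_left_pow (k : ℕ) : (1/3 : ENNReal)^k ≤ P (Set.Icc (0:ℝ) ((1/5)^k)) := by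
  induction k with
  | zero => simp [P_Icc01 hP]
  | succ k ih =>
    have hpre : S1 ⁻¹' (Set.Icc (0:ℝ) ((1/5)^(k+1))) = Set.Icc (0:ℝ) ((1/5)^k) := by
      ext x
      simp only [Set.mem_preimage, Set.mem_Icc, S1]
      constructor
      · rintro ⟨h1, h2⟩
        constructor
        · linarith
        · have h5 : ((1:ℝ)/5)^(k+1) = (1/5)^k/5 := by ring
          rw [h5] at h2
          linarith
      · rintro ⟨h1, h2⟩
        constructor
        · linarith
        · have h5 : ((1:ℝ)/5)^(k+1) = (1/5)^k/5 := by ring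
          rw [h5]
          linarith
    have := P_piece_ge hP (Set.Icc (0:ℝ) ((1/5)^(k+1))) measurableSet_Icc
    rw [hpre] at this
    calc (1/3 : ENNReal)^(k+1) = 1/3 * (1/3)^k := by ring
    _ ≤ 1/3 * P (Set.Icc (0:ℝ) ((1/5)^k)) := by
        exact mul_le_mul_right ih _
    _ ≤ _ := this

lemma P_pos_right_pow (k : ℕ) : (1/3 : ENNReal)^k ≤ P (Set.Icc ((1:ℝ) - (1/5)^k) 1) := by
  induction k with
  | zero => simp [P_Icc01 hP]
  | succ k ih =>
    have hpre : S2 ⁻¹' (Set.Icc ((1:ℝ) - (1/5)^(k+1)) 1) = Set.Icc ((1:ℝ) - (1/5)^k) 1 := by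
      ext x
      have h5 : ((1:ℝ)/5)^(k+1) = (1/5)^k/5 := by ring
      simp only [Set.mem_preimage, Set.mem_Icc, S2, h5]
      constructor
      · rintro ⟨h1, h2⟩
        exact ⟨by linarith, by linarith⟩
      · rintro ⟨h1, h2⟩
        exact ⟨by linarith, by linarith⟩
    have := P_piece_ge2 hP (Set.Icc ((1:ℝ) - (1/5)^(k+1)) 1) measurableSet_Icc
    rw [hpre] at this
    calc (1/3 : ENNReal)^(k+1) = 1/3 * (1/3)^k := by ring
    _ ≤ 1/3 * P (Set.Icc ((1:ℝ) - (1/5)^k) 1) := mul_le_mul_right ih _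
    _ ≤ _ := this

lemma P_pos_left (δ : ℝ) (hδ : 0 < δ) : 0 < P (Set.Icc (0:ℝ) δ) := by
  obtain ⟨k, hk⟩ : ∃ k : ℕ, ((1:ℝ)/5)^k < δ :=
    exists_pow_lt_of_lt_one hδ (by norm_num)
  have h1 : P (Set.Icc (0:ℝ) ((1/5)^k)) ≤ P (Set.Icc (0:ℝ) δ) :=
    measure_mono (Set.Icc_subset_Icc le_rfl hk.le)
  calc (0:ENNReal) < (1/3)^k := by
        apply ENNReal.pow_pos
        norm_num
  _ ≤ P (Set.Icc (0:ℝ) ((1/5)^k)) := P_pos_left_pow hP k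
  _ ≤ _ := h1

lemma P_pos_right (δ : ℝ) (hδ : 0 < δ) : 0 < P (Set.Icc ((1:ℝ) - δ) 1) := by
  obtain ⟨k, hk⟩ : ∃ k : ℕ, ((1:ℝ)/5)^k < δ :=
    exists_pow_lt_of_lt_one hδ (by norm_num)
  have h1 : P (Set.Icc ((1:ℝ) - (1/5)^k) 1) ≤ P (Set.Icc ((1:ℝ) - δ) 1) :=
    measure_mono (Set.Icc_subset_Icc (by linarith) le_rfl)
  calc (0:ENNReal) < (1/3)^k := by
        apply ENNReal.pow_pos
        norm_num
  _ ≤ P (Set.Icc ((1:ℝ) - (1/5)^k) 1) := P_pos_right_pow hP k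
  _ ≤ _ := h1

/-- The strict improvement engine: if we can strictly improve an optimal set on a positive
measure region, contradiction. -/
lemma improve {n : ℕ} {α : Set ℝ} (hopt : IsOptimalSet P n α) (α' : Set ℝ)
    (hfin' : α'.Finite) (hne' : α'.Nonempty) (hcard' : α'.ncard ≤ n)
    (hle : ∀ x ∈ Set.Icc (0:ℝ) 1, Metric.infDist x α' ≤ Metric.infDist x α)
    (E : Set ℝ) (hE : MeasurableSet E) (hEsub : E ⊆ Set.Icc (0:ℝ) 1) (hEpos : 0 < P E)
    (c : ℝ) (hc : 0 < c)
    (hgap : ∀ x ∈ E, (Metric.infDist x α')^2 + c ≤ (Metric.infDist x α)^2) : False := by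
  haveI := hP.1
  set f := fun x : ℝ => (Metric.infDist x α)^2 with hfdef
  set g := fun x : ℝ => (Metric.infDist x α')^2 with hgdef
  have hfi : Integrable f P := P_integrable hP f (cont_infDist_sq α)
  have hgi : Integrable g P := P_integrable hP g (cont_infDist_sq α')
  have hdiffi : Integrable (fun x => f x - g x) P := hfi.sub hgi
  have hdnn : 0 ≤ᵐ[P] (fun x => f x - g x) := by
    filter_upwards [P_ae hP] with x hx
    have h1 := hle x hx
    have h2 : (0:ℝ) ≤ Metric.infDist x α' := Metric.infDist_nonneg
    simp only [hfdef, hgdef, Pi.zero_apply]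
    nlinarith
  have hsub : (∫ x in E, (f x - g x) ∂P) ≤ ∫ x, (f x - g x) ∂P :=
    MeasureTheory.setIntegral_le_integral hdiffi hdnn
  have hconst : c * (P E).toReal ≤ ∫ x in E, (f x - g x) ∂P := by
    rw [show c * (P E).toReal = P.real E • c by rw [smul_eq_mul, mul_comm]; rfl]
    apply MeasureTheory.setIntegral_ge_of_const_le hE (measure_ne_top P E)
    · intro x hx
      have := hgap x hx
      simp only [hfdef, hgdef]
      linarith
    · exact hdiffi.integrableOn
  have hEtr : 0 < (P E).toReal :=
    ENNReal.toReal_pos hEpos.ne' (measure_ne_top P E)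
  have hlt : distortion P α' < distortion P α := by
    have h1 : distortion P α - distortion P α' = ∫ x, (f x - g x) ∂P := by
      rw [distortion, distortion]
      rw [MeasureTheory.integral_sub hfi hgi]
    nlinarith
  have h2 := quantErr_le (P := P) n α' hfin' hne' hcard'
  rw [← hopt.2.2.2] at h2
  linarith

end Pfacts6
end CondAux2
namespace CondAux2
open CondAux intervalIntegral

section Main1
variable {P : Measure ℝ} (hP : IsCondensation P nuUnif)
include hP

lemma I2_nonneg (A : Set ℝ) : 0 ≤ ∫ x, (Metric.infDist (S2 x) A)^2 ∂P :=
  MeasureTheory.integral_nonneg fun x => by positivity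

lemma I1_nonneg (A : Set ℝ) : 0 ≤ ∫ x, (Metric.infDist (S1 x) A)^2 ∂P :=
  MeasureTheory.integral_nonneg fun x => by positivity

omit hP in
lemma Inu_nonneg (A : Set ℝ) : 0 ≤ ∫ x in (2/5:ℝ)..(3/5), (Metric.infDist x A)^2 :=
  intervalIntegral.integral_nonneg (by norm_num) (fun x _ => by positivity)

lemma meets_J1 {n : ℕ} {α : Set ℝ} (hopt : IsOptimalSet P n α) (hn : 3 ≤ n) :
    (α ∩ Set.Icc (0:ℝ) (1/5)).Nonempty := by
  by_contra hcon
  rw [Set.not_nonempty_iff_eq_empty] at hcon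
  have hdisj : ∀ a ∈ α, a < 0 ∨ 1/5 < a := by
    intro a ha
    by_contra h
    push_neg at h
    have : a ∈ α ∩ Set.Icc (0:ℝ) (1/5) := ⟨ha, Set.mem_Icc.mpr ⟨h.1, h.2⟩⟩
    rw [hcon] at this
    exact this
  obtain ⟨hfin, hne, hcard, hval⟩ := hopt
  by_cases hneg : (α ∩ Set.Iio 0).Nonempty
  · -- there is a negative point: strict improvement
    have hnegfin : (α ∩ Set.Iio 0).Finite := hfin.inter_of_left _
    have hFne : hnegfin.toFinset.Nonempty := by
      rw [Set.Finite.toFinset_nonempty]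
      exact hneg
    set astar := hnegfin.toFinset.max' hFne with hastar
    have hastar_mem : astar ∈ α ∩ Set.Iio 0 := by
      have := hnegfin.toFinset.max'_mem hFne
      rwa [Set.Finite.mem_toFinset] at this
    have hastar_max : ∀ a ∈ α, a < 0 → a ≤ astar := by
      intro a ha ha0
      apply hnegfin.toFinset.le_max'
      rw [Set.Finite.mem_toFinset]
      exact ⟨ha, ha0⟩
    set δ := min (-astar) (1/5) / 3 with hδdef
    have hδpos : 0 < δ := by
      have := hastar_mem.2
      simp only [Set.mem_Iio] at this
      apply div_pos _ (by norm_num)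
      apply lt_min (by linarith) (by norm_num)
    have h3δ1 : 3*δ ≤ -astar := by
      have := min_le_left (-astar) (1/5:ℝ)
      rw [hδdef]; linarith
    have h3δ2 : 3*δ ≤ 1/5 := by
      have := min_le_right (-astar) (1/5:ℝ)
      rw [hδdef]; linarith
    have hFne2 : hfin.toFinset.Nonempty := by
      rw [Set.Finite.toFinset_nonempty]; exact hne
    set amin := hfin.toFinset.min' hFne2 with hamin
    have hamin_mem : amin ∈ α := by
      have := hfin.toFinset.min'_mem hFne2
      rwa [Set.Finite.mem_toFinset] at this
    have hamin_min : ∀ a ∈ α, amin ≤ a := by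
      intro a ha
      apply hfin.toFinset.min'_le
      rwa [Set.Finite.mem_toFinset]
    have hamin_neg : amin ≤ astar := hamin_min _ hastar_mem.1
    set α' := insert δ (α \ {amin}) with hα'
    have hfin' : α'.Finite := ((hfin.subset Set.diff_subset).insert δ)
    have hne' : α'.Nonempty := ⟨δ, Set.mem_insert _ _⟩
    have hcard' : α'.ncard ≤ n := by
      have h1 : α'.ncard ≤ (α \ {amin}).ncard + 1 := Set.ncard_insert_le _ _
      have h2 : (α \ {amin}).ncard + 1 = α.ncard :=
        Set.ncard_diff_singleton_add_one hamin_mem hfin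
      omega
    refine improve hP ⟨hfin, hne, hcard, hval⟩ α' hfin' hne' hcard' ?_
      (Set.Icc 0 δ) measurableSet_Icc ?_ (P_pos_left hP δ hδpos) (3*δ^2) (by positivity) ?_
    · -- infDist decreases everywhere on [0,1]
      intro x hx
      obtain ⟨y, hy, hyd⟩ := (hfin.isCompact).exists_infDist_eq_dist hne x
      rw [hyd]
      by_cases hyamin : y = amin
      · have hxd : Metric.infDist x α' ≤ |x - δ| := by
          rw [← Real.dist_eq]
          exact Metric.infDist_le_dist_of_mem (Set.mem_insert _ _)
        have : |x - δ| ≤ dist x y := by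
          rw [hyamin, Real.dist_eq]
          have hmx : amin ≤ astar := hamin_neg
          have hax : astar < 0 := hastar_mem.2
          rw [abs_of_nonneg (by linarith [hx.1] : (0:ℝ) ≤ x - amin)]
          rcases le_total δ x with hc | hc
          · rw [abs_of_nonneg (by linarith)]
            linarith
          · rw [abs_of_nonpos (by linarith)]
            linarith [hx.1]
        linarith
      · apply Metric.infDist_le_dist_of_mem
        exact Set.mem_insert_of_mem _ ⟨hy, hyamin⟩
    · intro x hx
      rw [Set.mem_Icc] at hx ⊢
      exact ⟨hx.1, by linarith [hx.2]⟩
    · intro x hx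
      rw [Set.mem_Icc] at hx
      have hup : Metric.infDist x α' ≤ δ := by
        have h1 : Metric.infDist x α' ≤ |x - δ| := by
          rw [← Real.dist_eq]
          exact Metric.infDist_le_dist_of_mem (Set.mem_insert _ _)
        have : |x - δ| ≤ δ := by
          rw [abs_le]
          constructor <;> linarith [hx.1, hx.2]
        linarith
      have hlow : 2*δ ≤ Metric.infDist x α := by
        apply le_infDist_of α hne
        intro a ha
        rcases hdisj a ha with hneg' | hpos'
        · have := hastar_max a ha hneg'
          rw [abs_of_nonneg (by linarith [hx.1] : (0:ℝ) ≤ x - a)]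
          linarith [hx.1]
        · rw [abs_of_nonpos (by linarith [hx.2] : x - a ≤ 0)]
          linarith [hx.2]
      have h0 : 0 ≤ Metric.infDist x α' := Metric.infDist_nonneg
      nlinarith
  · -- all points > 1/5
    have hall : ∀ a ∈ α, 1/5 ≤ a := by
      intro a ha
      rcases hdisj a ha with h | h
      · exact absurd ⟨a, ha, h⟩ hneg
      · linarith
    have h1 := atomJ1_far hP α hne hall
    have h2 := I2_nonneg hP α
    have h3 := Inu_nonneg α
    have hub := UB3 hP n hn
    have hdec := distortion_decomp hP α
    rw [hval] at hdec
    -- quantErr P n = 1/3*I1 + ... ≥ 1/3*(79/5475) = 79/16425 > 89/21900 ≥ quantErr P n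
    linarith

lemma meets_J2 {n : ℕ} {α : Set ℝ} (hopt : IsOptimalSet P n α) (hn : 3 ≤ n) :
    (α ∩ Set.Icc (4/5:ℝ) 1).Nonempty := by
  by_contra hcon
  rw [Set.not_nonempty_iff_eq_empty] at hcon
  have hdisj : ∀ a ∈ α, a < 4/5 ∨ 1 < a := by
    intro a ha
    by_contra h
    push_neg at h
    have : a ∈ α ∩ Set.Icc (4/5:ℝ) 1 := ⟨ha, Set.mem_Icc.mpr ⟨h.1, h.2⟩⟩
    rw [hcon] at this
    exact this
  obtain ⟨hfin, hne, hcard, hval⟩ := hopt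
  by_cases hpos : (α ∩ Set.Ioi 1).Nonempty
  · have hposfin : (α ∩ Set.Ioi 1).Finite := hfin.inter_of_left _
    have hFne : hposfin.toFinset.Nonempty := by
      rw [Set.Finite.toFinset_nonempty]
      exact hpos
    set astar := hposfin.toFinset.min' hFne with hastar
    have hastar_mem : astar ∈ α ∩ Set.Ioi 1 := by
      have := hposfin.toFinset.min'_mem hFne
      rwa [Set.Finite.mem_toFinset] at this
    have hastar_min : ∀ a ∈ α, 1 < a → astar ≤ a := by
      intro a ha ha0
      apply hposfin.toFinset.min'_le
      rw [Set.Finite.mem_toFinset]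
      exact ⟨ha, ha0⟩
    set δ := min (astar - 1) (1/5) / 3 with hδdef
    have hδpos : 0 < δ := by
      have := hastar_mem.2
      simp only [Set.mem_Ioi] at this
      apply div_pos _ (by norm_num)
      apply lt_min (by linarith) (by norm_num)
    have h3δ1 : 3*δ ≤ astar - 1 := by
      have := min_le_left (astar - 1) (1/5:ℝ)
      rw [hδdef]; linarith
    have h3δ2 : 3*δ ≤ 1/5 := by
      have := min_le_right (astar - 1) (1/5:ℝ)
      rw [hδdef]; linarith
    have hFne2 : hfin.toFinset.Nonempty := by
      rw [Set.Finite.toFinset_nonempty]; exact hne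
    set amax := hfin.toFinset.max' hFne2 with hamax
    have hamax_mem : amax ∈ α := by
      have := hfin.toFinset.max'_mem hFne2
      rwa [Set.Finite.mem_toFinset] at this
    have hamax_max : ∀ a ∈ α, a ≤ amax := by
      intro a ha
      apply hfin.toFinset.le_max'
      rwa [Set.Finite.mem_toFinset]
    have hamax_pos : astar ≤ amax := hamax_max _ hastar_mem.1
    set α' := insert (1 - δ) (α \ {amax}) with hα'
    have hfin' : α'.Finite := ((hfin.subset Set.diff_subset).insert _)
    have hne' : α'.Nonempty := ⟨1 - δ, Set.mem_insert _ _⟩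
    have hcard' : α'.ncard ≤ n := by
      have h1 : α'.ncard ≤ (α \ {amax}).ncard + 1 := Set.ncard_insert_le _ _
      have h2 : (α \ {amax}).ncard + 1 = α.ncard :=
        Set.ncard_diff_singleton_add_one hamax_mem hfin
      omega
    refine improve hP ⟨hfin, hne, hcard, hval⟩ α' hfin' hne' hcard' ?_
      (Set.Icc (1-δ) 1) measurableSet_Icc ?_ (P_pos_right hP δ hδpos) (3*δ^2) (by positivity) ?_
    · intro x hx
      obtain ⟨y, hy, hyd⟩ := (hfin.isCompact).exists_infDist_eq_dist hne x
      rw [hyd]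
      by_cases hyamax : y = amax
      · have hxd : Metric.infDist x α' ≤ |x - (1 - δ)| := by
          rw [← Real.dist_eq]
          exact Metric.infDist_le_dist_of_mem (Set.mem_insert _ _)
        have : |x - (1 - δ)| ≤ dist x y := by
          rw [hyamax, Real.dist_eq]
          have hax : 1 < astar := hastar_mem.2
          rw [abs_of_nonpos (by linarith [hx.2] : x - amax ≤ 0)]
          rcases le_total x (1 - δ) with hc | hc
          · rw [abs_of_nonpos (by linarith)]
            linarith [hx.2]
          · rw [abs_of_nonneg (by linarith)]
            linarith [hx.2]
        linarith
      · apply Metric.infDist_le_dist_of_mem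
        exact Set.mem_insert_of_mem _ ⟨hy, hyamax⟩
    · intro x hx
      rw [Set.mem_Icc] at hx ⊢
      exact ⟨by linarith [hx.1, hδpos, h3δ2], hx.2⟩
    · intro x hx
      rw [Set.mem_Icc] at hx
      have hup : Metric.infDist x α' ≤ δ := by
        have h1 : Metric.infDist x α' ≤ |x - (1 - δ)| := by
          rw [← Real.dist_eq]
          exact Metric.infDist_le_dist_of_mem (Set.mem_insert _ _)
        have : |x - (1 - δ)| ≤ δ := by
          rw [abs_le]
          constructor <;> linarith [hx.1, hx.2]
        linarith
      have hlow : 2*δ ≤ Metric.infDist x α := by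
        apply le_infDist_of α hne
        intro a ha
        rcases hdisj a ha with hlt | hgt
        · rw [abs_of_nonneg (by linarith [hx.1] : (0:ℝ) ≤ x - a)]
          linarith [hx.1]
        · have := hastar_min a ha hgt
          rw [abs_of_nonpos (by linarith [hx.2] : x - a ≤ 0)]
          linarith [hx.2]
      have h0 : 0 ≤ Metric.infDist x α' := Metric.infDist_nonneg
      nlinarith
  · have hall : ∀ a ∈ α, a ≤ 4/5 := by
      intro a ha
      rcases hdisj a ha with h | h
      · linarith
      · exact absurd ⟨a, ha, h⟩ hpos
    have h1 := atomJ2_far hP α hne hall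
    have h2 := I1_nonneg hP α
    have h3 := Inu_nonneg α
    have hub := UB3 hP n hn
    have hdec := distortion_decomp hP α
    rw [hval] at hdec
    linarith

end Main1
end CondAux2
namespace CondAux2
open CondAux intervalIntegral

section MainC
variable {P : Measure ℝ} (hP : IsCondensation P nuUnif)
include hP

lemma meets_C {n : ℕ} {α : Set ℝ} (hopt : IsOptimalSet P n α) (hn : 3 ≤ n) :
    (α ∩ Set.Icc (2/5:ℝ) (3/5)).Nonempty := by
  classical
  obtain ⟨u, hu, huIcc⟩ := meets_J1 hP hopt hn
  obtain ⟨w, hw, hwIcc⟩ := meets_J2 hP hopt hn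
  rw [Set.mem_Icc] at huIcc hwIcc
  by_contra hcon
  rw [Set.not_nonempty_iff_eq_empty] at hcon
  have hout : ∀ p ∈ α, p < 2/5 ∨ 3/5 < p := by
    intro p hp
    by_contra h
    push_neg at h
    have : p ∈ α ∩ Set.Icc (2/5:ℝ) (3/5) := ⟨hp, Set.mem_Icc.mpr ⟨h.1, h.2⟩⟩
    rw [hcon] at this
    exact this
  have hout' : ∀ p ∈ α, p ≤ 2/5 ∨ 3/5 ≤ p := by
    intro p hp
    rcases hout p hp with h | h
    · exact Or.inl h.le
    · exact Or.inr h.le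
  obtain ⟨hfin, hne, hcard, hval⟩ := hopt
  have hdec := distortion_decomp hP α
  rw [hval] at hdec
  have hI1nn := I1_nonneg hP α
  have hI2nn := I2_nonneg hP α
  have hInn := Inu_nonneg α
  -- the universal flank bound
  have hCbase : (1:ℝ)/1500 ≤ ∫ x in (2/5:ℝ)..(3/5), (Metric.infDist x α)^2 := by
    have h := atomC α hne (2/5) (3/5) (by norm_num) (by norm_num) (by norm_num) (by norm_num) hout'
    norm_num at h
    linarith
  rcases le_or_gt 6 n with h6 | h6
  · -- n ≥ 6 : flank bound beats UB6
    have hub := UB6 hP n h6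
    linarith
  -- now n ∈ {3,4,5}
  have hn5 : n ≤ 5 := by omega
  -- counting setup
  set F := hfin.toFinset with hF
  have hcardF : F.card ≤ n := by
    rw [hF, ← Set.ncard_eq_toFinset_card α hfin]
    exact hcard
  set F1 := F.filter (fun a => a ≤ 3/10) with hF1
  set F2 := F.filter (fun a => 3/10 < a ∧ a < 2/5) with hF2
  set F3 := F.filter (fun a => 3/5 < a ∧ a < 7/10) with hF3
  set F4 := F.filter (fun a => 7/10 ≤ a) with hF4
  have hmemF : ∀ a, a ∈ F ↔ a ∈ α := by
    intro a
    rw [hF, Set.Finite.mem_toFinset]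
  have hd12 : Disjoint F1 F2 := by
    rw [Finset.disjoint_left]
    intro a h1 h2
    rw [hF1, Finset.mem_filter] at h1
    rw [hF2, Finset.mem_filter] at h2
    linarith [h1.2, h2.2.1]
  have hd34 : Disjoint F3 F4 := by
    rw [Finset.disjoint_left]
    intro a h1 h2
    rw [hF3, Finset.mem_filter] at h1
    rw [hF4, Finset.mem_filter] at h2
    linarith [h1.2.2, h2.2]
  have hd_left_right : Disjoint (F1 ∪ F2) (F3 ∪ F4) := by
    rw [Finset.disjoint_left]
    intro a h1 h2
    rw [Finset.mem_union] at h1 h2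
    have ha1 : a ≤ 2/5 := by
      rcases h1 with h | h
      · rw [hF1, Finset.mem_filter] at h; linarith [h.2]
      · rw [hF2, Finset.mem_filter] at h; linarith [h.2.2]
    have ha2 : 3/5 ≤ a := by
      rcases h2 with h | h
      · rw [hF3, Finset.mem_filter] at h; linarith [h.2.1]
      · rw [hF4, Finset.mem_filter] at h; linarith [h.2]
    linarith
  have hsum : F1.card + F2.card + F3.card + F4.card ≤ n := by
    have e1 : (F1 ∪ F2).card = F1.card + F2.card := Finset.card_union_of_disjoint hd12
    have e2 : (F3 ∪ F4).card = F3.card + F4.card := Finset.card_union_of_disjoint hd34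
    have e3 : ((F1 ∪ F2) ∪ (F3 ∪ F4)).card = (F1 ∪ F2).card + (F3 ∪ F4).card :=
      Finset.card_union_of_disjoint hd_left_right
    have hsub : (F1 ∪ F2) ∪ (F3 ∪ F4) ⊆ F := by
      apply Finset.union_subset
      · exact Finset.union_subset (Finset.filter_subset _ _) (Finset.filter_subset _ _)
      · exact Finset.union_subset (Finset.filter_subset _ _) (Finset.filter_subset _ _)
    have := Finset.card_le_card hsub
    omega
  have huF1 : u ∈ F1 := by
    rw [hF1, Finset.mem_filter, hmemF]
    exact ⟨hu, by linarith [huIcc.2]⟩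
  have hwF4 : w ∈ F4 := by
    rw [hF4, Finset.mem_filter, hmemF]
    exact ⟨hw, by linarith [hwIcc.1]⟩
  have hl1 : 1 ≤ F1.card := Finset.card_pos.mpr ⟨u, huF1⟩
  have hr1 : 1 ≤ F4.card := Finset.card_pos.mpr ⟨w, hwF4⟩
  -- helper facts
  have hl_one : F1.card = 1 → ∀ a ∈ α, a ≤ 3/10 → a = u := by
    intro h1 a ha hale
    have haF1 : a ∈ F1 := by
      rw [hF1, Finset.mem_filter, hmemF]
      exact ⟨ha, hale⟩
    obtain ⟨x, hx⟩ := Finset.card_eq_one.mp h1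
    rw [hx, Finset.mem_singleton] at haF1 huF1
    rw [haF1, huF1]
  have hr_one : F4.card = 1 → ∀ a ∈ α, 7/10 ≤ a → a = w := by
    intro h1 a ha hale
    have haF4 : a ∈ F4 := by
      rw [hF4, Finset.mem_filter, hmemF]
      exact ⟨ha, hale⟩
    obtain ⟨x, hx⟩ := Finset.card_eq_one.mp h1
    rw [hx, Finset.mem_singleton] at haF4 hwF4
    rw [haF4, hwF4]
  have hm1_zero : F2.card = 0 → ∀ p ∈ α, p < 2/5 → p ≤ 3/10 := by
    intro h2 p hp hlt
    by_contra hgt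
    push_neg at hgt
    have : p ∈ F2 := by
      rw [hF2, Finset.mem_filter, hmemF]
      exact ⟨hp, hgt, hlt⟩
    rw [Finset.card_eq_zero.mp h2] at this
    exact absurd this (Finset.notMem_empty p)
  have hm2_zero : F3.card = 0 → ∀ p ∈ α, 3/5 < p → 7/10 ≤ p := by
    intro h3 p hp hlt
    by_contra hgt
    push_neg at hgt
    have : p ∈ F3 := by
      rw [hF3, Finset.mem_filter, hmemF]
      exact ⟨hp, hlt, hgt⟩
    rw [Finset.card_eq_zero.mp h3] at this
    exact absurd this (Finset.notMem_empty p)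
  have hub3 := UB3 hP n hn
  by_cases hm1 : F2.card = 0 <;> by_cases hm2 : F3.card = 0
  · -- Branch A : both gaps empty
    have hfar : ∀ p ∈ α, p ≤ 3/10 ∨ 7/10 ≤ p := by
      intro p hp
      rcases hout p hp with h | h
      · exact Or.inl (hm1_zero hm1 p hp h)
      · exact Or.inr (hm2_zero hm2 p hp h)
    have hC := atomC α hne (3/10) (7/10) (by norm_num) (by norm_num) (by norm_num) (by norm_num)
      hfar
    norm_num at hC
    linarith
  · -- Branch D : m1 = 0, m2 ≥ 1
    rcases Nat.eq_or_lt_of_le hl1 with hl' | hl'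
    · -- l = 1 : all left points equal u ≤ 1/5
      have hfar : ∀ p ∈ α, p ≤ 1/5 ∨ 3/5 ≤ p := by
        intro p hp
        rcases hout p hp with h | h
        · have h30 := hm1_zero hm1 p hp h
          have := hl_one hl'.symm p hp h30
          rw [this]
          exact Or.inl huIcc.2
        · exact Or.inr h.le
      have hC := atomC α hne (1/5) (3/5) (by norm_num) (by norm_num) (by norm_num) (by norm_num)
        hfar
      norm_num at hC
      linarith
    · -- l ≥ 2
      have hfar : ∀ p ∈ α, p ≤ 3/10 ∨ 3/5 ≤ p := by
        intro p hp
        rcases hout p hp with h | h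
        · exact Or.inl (hm1_zero hm1 p hp h)
        · exact Or.inr h.le
      have hC := atomC α hne (3/10) (3/5) (by norm_num) (by norm_num) (by norm_num) (by norm_num)
        hfar
      norm_num at hC
      have hm2' : 1 ≤ F3.card := Nat.pos_of_ne_zero hm2
      -- n ≥ 4 here
      rcases le_or_gt 5 n with h5 | h5
      · have hub5 := UB5 hP n h5
        linarith
      · -- n = 4 : r must be 1
        have hr' : F4.card = 1 := by omega
        have hJ2 := atomJ2_1 hP α hne w (hr_one hr' )
        have hub4 := UB4 hP n (by omega)
        linarith
  · -- Branch C : m1 ≥ 1, m2 = 0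
    rcases Nat.eq_or_lt_of_le hr1 with hr' | hr'
    · -- r = 1 : all right points equal w ≥ 4/5
      have hfar : ∀ p ∈ α, p ≤ 2/5 ∨ 4/5 ≤ p := by
        intro p hp
        rcases hout p hp with h | h
        · exact Or.inl h.le
        · have h70 := hm2_zero hm2 p hp h
          have := hr_one hr'.symm p hp h70
          rw [this]
          exact Or.inr hwIcc.1
      have hC := atomC α hne (2/5) (4/5) (by norm_num) (by norm_num) (by norm_num) (by norm_num)
        hfar
      norm_num at hC
      linarith
    · -- r ≥ 2
      have hfar : ∀ p ∈ α, p ≤ 2/5 ∨ 7/10 ≤ p := by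
        intro p hp
        rcases hout p hp with h | h
        · exact Or.inl h.le
        · exact Or.inr (hm2_zero hm2 p hp h)
      have hC := atomC α hne (2/5) (7/10) (by norm_num) (by norm_num) (by norm_num) (by norm_num)
        hfar
      norm_num at hC
      have hm1' : 1 ≤ F2.card := Nat.pos_of_ne_zero hm1
      rcases le_or_gt 5 n with h5 | h5
      · have hub5 := UB5 hP n h5
        linarith
      · have hl' : F1.card = 1 := by omega
        have hJ1 := atomJ1_1 hP α hne u (hl_one hl')
        have hub4 := UB4 hP n (by omega)
        linarith
  · -- Branch B : m1 ≥ 1 and m2 ≥ 1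
    have hm1' : 1 ≤ F2.card := Nat.pos_of_ne_zero hm1
    have hm2' : 1 ≤ F3.card := Nat.pos_of_ne_zero hm2
    have hn4 : 4 ≤ n := by omega
    by_cases hlr : F1.card = 1 ∧ F4.card = 1
    · have hJ1 := atomJ1_1 hP α hne u (hl_one hlr.1)
      have hJ2 := atomJ2_1 hP α hne w (hr_one hlr.2)
      have hub4 := UB4 hP n hn4
      linarith
    · -- n = 5 and one side still has exactly one point
      have h5 : 5 ≤ n := by
        rcases Nat.lt_or_ge n 5 with hlt | hge
        · exfalso
          apply hlr
          constructor <;> omega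
        · exact hge
      have hub5 := UB5 hP n h5
      have hside : F1.card = 1 ∨ F4.card = 1 := by omega
      rcases hside with hs | hs
      · have hJ1 := atomJ1_1 hP α hne u (hl_one hs)
        linarith
      · have hJ2 := atomJ2_1 hP α hne w (hr_one hs)
        linarith

end MainC
end CondAux2
theorem optimal_sets_meet_pieces_uniform (P : MeasureTheory.Measure ℝ)
    (hP : IsCondensation P nuUnif) :
    ∀ n : ℕ, 3 ≤ n → ∀ α : Set ℝ, IsOptimalSet P n α →
      (α ∩ Set.Icc (0 : ℝ) (1 / 5)).Nonempty ∧
      (α ∩ Set.Icc (4 / 5 : ℝ) 1).Nonempty ∧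
      (α ∩ Set.Icc (2 / 5 : ℝ) (3 / 5)).Nonempty := by
  intro n hn α hopt
  exact ⟨CondAux2.meets_J1 hP hopt hn, CondAux2.meets_J2 hP hopt hn,
    CondAux2.meets_C hP hopt hn⟩
end

section
/- The quantization dimension of order 2 of the condensation measure P exists and equals 1; that is, the sequence (2·log n)/(−log V_n(P)) converges to 1 as n → ∞. -/
open MeasureTheory Metric Set Filter

namespace QDim

lemma meas_S1 : Measurable S1 := by
  unfold S1; fun_prop

lemma meas_S2 : Measurable S2 := by
  unfold S2; fun_prop

/-- The condensation measure is supported on `[0,1]`. -/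
lemma support_subset (P : MeasureTheory.Measure ℝ) (hP : IsCondensation P nuUnif) :
    P (Set.Icc (0:ℝ) 1)ᶜ = 0 := by
  obtain ⟨hprob, heq⟩ := hP
  set C : Set ℝ := (Set.Icc (0:ℝ) 1)ᶜ with hC
  have hCm : MeasurableSet C := (measurableSet_Icc).compl
  have h1 : S1 ⁻¹' C ⊆ C := by
    intro x hx
    simp only [hC, Set.mem_compl_iff, Set.mem_preimage, Set.mem_Icc, S1] at hx ⊢
    intro h
    exact hx ⟨by linarith [h.1], by linarith [h.2]⟩
  have h2 : S2 ⁻¹' C ⊆ C := by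
    intro x hx
    simp only [hC, Set.mem_compl_iff, Set.mem_preimage, Set.mem_Icc, S2] at hx ⊢
    intro h
    exact hx ⟨by linarith [h.1], by linarith [h.2]⟩
  have hnu : nuUnif C = 0 := by
    have : Set.Icc (2/5 : ℝ) (3/5) ∩ C = ∅ := by
      ext x
      simp only [hC, Set.mem_inter_iff, Set.mem_compl_iff, Set.mem_Icc, Set.mem_empty_iff_false,
        iff_false, not_and, not_not]
      intro h1 h2
      exact (h2 (by linarith [h1.1])) (by linarith [h1.2])
    simp only [nuUnif, MeasureTheory.Measure.smul_apply, smul_eq_mul,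
      MeasureTheory.Measure.restrict_apply hCm]
    rw [Set.inter_comm, this]
    simp
  have key : P C ≤ (1/3 : ENNReal) * P C + (1/3 : ENNReal) * P C := by
    calc P C = ((1 / 3 : ENNReal) • P.map S1 + (1 / 3 : ENNReal) • P.map S2
        + (1 / 3 : ENNReal) • nuUnif) C := by rw [← heq]
    _ = (1/3 : ENNReal) * (P.map S1) C + (1/3 : ENNReal) * (P.map S2) C
        + (1/3 : ENNReal) * nuUnif C := by
        simp [MeasureTheory.Measure.add_apply, MeasureTheory.Measure.smul_apply]
    _ = (1/3 : ENNReal) * P (S1 ⁻¹' C) + (1/3 : ENNReal) * P (S2 ⁻¹' C) := by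
        rw [MeasureTheory.Measure.map_apply meas_S1 hCm,
          MeasureTheory.Measure.map_apply meas_S2 hCm, hnu, mul_zero, add_zero]
    _ ≤ (1/3 : ENNReal) * P C + (1/3 : ENNReal) * P C := by
        gcongr <;> exact measure_mono ‹_›
  have hfin : P C ≠ ⊤ := (measure_lt_top P C).ne
  have h23 : P C ≤ ((1/3 : ENNReal) + 1/3) * P C := by
    rw [add_mul]; exact key
  by_contra hne
  have hlt : ((1/3 : ENNReal) + 1/3) < 1 := by
    rw [ENNReal.div_add_div_same, ENNReal.div_lt_iff (by norm_num) (by norm_num)]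
    norm_num
  have : ((1/3 : ENNReal) + 1/3) * P C < 1 * P C :=
    by rw [mul_comm _ (P C), mul_comm 1 (P C)]; exact ENNReal.mul_lt_mul_right hne hfin hlt
  rw [one_mul] at this
  exact absurd (lt_of_le_of_lt h23 this) (lt_irrefl _)

lemma ae_mem (P : MeasureTheory.Measure ℝ) (hP : IsCondensation P nuUnif) :
    ∀ᵐ x ∂P, x ∈ Set.Icc (0:ℝ) 1 := by
  rw [MeasureTheory.ae_iff]
  have := support_subset P hP
  convert this using 2
  ext x; simp

lemma integrable_f (P : MeasureTheory.Measure ℝ) (hP : IsCondensation P nuUnif)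
    (α : Set ℝ) (hne : α.Nonempty) :
    MeasureTheory.Integrable (fun x => (Metric.infDist x α) ^ 2) P := by
  obtain ⟨a₀, ha₀⟩ := hne
  have hprob : MeasureTheory.IsProbabilityMeasure P := hP.1
  have hcont : Continuous (fun x : ℝ => (Metric.infDist x α) ^ 2) :=
    (continuous_infDist_pt α).pow 2
  refine MeasureTheory.Integrable.mono' (MeasureTheory.integrable_const ((1 + |a₀|)^2))
    hcont.aestronglyMeasurable ?_
  filter_upwards [ae_mem P hP] with x hx
  rw [Real.norm_eq_abs, abs_of_nonneg (by positivity)]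
  have h1 : Metric.infDist x α ≤ dist x a₀ := Metric.infDist_le_dist_of_mem ha₀
  have h2 : dist x a₀ ≤ 1 + |a₀| := by
    rw [Real.dist_eq]
    calc |x - a₀| ≤ |x| + |a₀| := abs_sub _ _
    _ ≤ 1 + |a₀| := by
        have := abs_le.mpr ⟨by linarith [hx.1], hx.2⟩
        linarith
  exact pow_le_pow_left₀ Metric.infDist_nonneg (le_trans h1 h2) 2

lemma upper_bound (P : MeasureTheory.Measure ℝ) (hP : IsCondensation P nuUnif) (n : ℕ)
    (hn : 1 ≤ n) : quantErr P n ≤ 1 / (4 * n ^ 2) := by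
  have hprob : MeasureTheory.IsProbabilityMeasure P := hP.1
  have hn0 : (0:ℝ) < n := by exact_mod_cast hn
  set α : Set ℝ := (fun k : ℕ => ((k:ℝ) + 1/2)/n) '' ↑(Finset.range n) with hα
  have hfin : α.Finite := (Finset.range n).finite_toSet.image _
  have hne : α.Nonempty := ⟨(0 + 1/2)/n, ⟨0, by simpa using Nat.lt_of_lt_of_le Nat.zero_lt_one hn, by norm_num⟩⟩
  have hcard : α.ncard ≤ n := by
    calc α.ncard ≤ (↑(Finset.range n) : Set ℕ).ncard := Set.ncard_image_le (Finset.range n).finite_toSet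
    _ = n := by rw [Set.ncard_coe_finset, Finset.card_range]
  -- infDist bound on [0,1]
  have hbd : ∀ x ∈ Set.Icc (0:ℝ) 1, Metric.infDist x α ≤ 1/(2*n) := by
    intro x hx
    obtain ⟨hx0, hx1⟩ := hx
    set k : ℕ := min (⌊(n:ℝ) * x⌋₊) (n-1) with hk
    have hkn : k ∈ Finset.range n := by
      simp only [Finset.mem_range, hk]
      exact lt_of_le_of_lt (min_le_right _ _) (Nat.sub_lt (by omega) one_pos)
    have hkx : (k:ℝ) ≤ n * x ∧ n * x ≤ (k:ℝ) + 1 := by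
      by_cases hc : ⌊(n:ℝ) * x⌋₊ ≤ n - 1
      · have hkeq : k = ⌊(n:ℝ) * x⌋₊ := min_eq_left hc
        constructor
        · rw [hkeq]; exact Nat.floor_le (by positivity)
        · rw [hkeq]; exact le_of_lt (Nat.lt_floor_add_one _)
      · push_neg at hc
        have hkeq : k = n - 1 := min_eq_right (le_of_lt hc)
        have hge : (n:ℝ) ≤ (n:ℝ) * x := by
          have : n ≤ ⌊(n:ℝ) * x⌋₊ := by omega
          exact_mod_cast (Nat.le_floor_iff (by positivity)).mp this
        have hkc : ((n:ℝ) - 1) = (k:ℝ) := by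
          rw [hkeq]; push_cast [Nat.cast_sub hn]; ring
        constructor
        · rw [← hkc]; linarith
        · rw [← hkc]; nlinarith
    have hmem : ((k:ℝ) + 1/2)/n ∈ α := ⟨k, by simpa using hkn, rfl⟩
    calc Metric.infDist x α ≤ dist x (((k:ℝ) + 1/2)/n) := Metric.infDist_le_dist_of_mem hmem
    _ ≤ 1/(2*n) := by
        have e1 : ((k:ℝ) + 1/2)/n - 1/(2*n) = (k:ℝ)/n := by field_simp; ring
        have e2 : ((k:ℝ) + 1/2)/n + 1/(2*n) = ((k:ℝ)+1)/n := by field_simp; ring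
        have h1 : (k:ℝ)/n ≤ x := by rw [div_le_iff₀ hn0]; linarith [hkx.1]
        have h2 : x ≤ ((k:ℝ)+1)/n := by rw [le_div_iff₀ hn0]; linarith [hkx.2]
        rw [Real.dist_eq, abs_le]
        constructor <;> [linarith [e1 ▸ h1]; linarith [e2 ▸ h2]]
  -- distortion bound
  have hint := integrable_f P hP α hne
  have hdist : distortion P α ≤ 1/(4 * n^2) := by
    have hmono : distortion P α ≤ ∫ _x, ((1:ℝ)/(2*(n:ℝ)))^2 ∂P := by
      unfold distortion
      apply MeasureTheory.integral_mono_ae hint (MeasureTheory.integrable_const _)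
      filter_upwards [ae_mem P hP] with x hx
      exact pow_le_pow_left₀ Metric.infDist_nonneg (hbd x hx) 2
    rw [MeasureTheory.integral_const] at hmono
    simp only [MeasureTheory.measure_univ, ENNReal.toReal_one, MeasureTheory.probReal_univ, one_smul] at hmono
    calc distortion P α ≤ ((1:ℝ)/(2*(n:ℝ)))^2 := hmono
    _ = 1/(4*n^2) := by field_simp; ring
  -- conclude
  have hmem : distortion P α ∈ {e : ℝ | ∃ β : Set ℝ, β.Finite ∧ β.Nonempty ∧ β.ncard ≤ n ∧ e = distortion P β} :=
    ⟨α, hfin, hne, hcard, rfl⟩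
  have hbdd : BddBelow {e : ℝ | ∃ β : Set ℝ, β.Finite ∧ β.Nonempty ∧ β.ncard ≤ n ∧ e = distortion P β} := by
    refine ⟨0, fun e he => ?_⟩
    obtain ⟨β, _, _, _, rfl⟩ := he
    exact MeasureTheory.integral_nonneg (fun x => by positivity)
  exact le_trans (csInf_le hbdd hmem) hdist

lemma lower_bound (P : MeasureTheory.Measure ℝ) (hP : IsCondensation P nuUnif) (n : ℕ)
    (hn : 1 ≤ n) : 1 / (2400 * n ^ 2) ≤ quantErr P n := by
  have hn0 : (0:ℝ) < n := by exact_mod_cast hn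
  apply le_csInf
  · refine ⟨distortion P {0}, {0}, Set.finite_singleton 0, ⟨0, rfl⟩, ?_, rfl⟩
    rw [Set.ncard_singleton]; omega
  rintro e ⟨β, hfin, hne, hcard, rfl⟩
  set f : ℝ → ℝ := fun x => (Metric.infDist x β) ^ 2 with hf
  have hfm : Measurable f := ((continuous_infDist_pt β).pow 2).measurable
  have hfnn : ∀ x, 0 ≤ f x := fun x => by positivity
  have hint : MeasureTheory.Integrable f P := integrable_f P hP β hne
  -- distortion as lintegral
  have heqd : distortion P β = (∫⁻ x, ENNReal.ofReal (f x) ∂P).toReal := by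
    unfold distortion
    rw [MeasureTheory.integral_eq_lintegral_of_nonneg_ae
      (Filter.Eventually.of_forall hfnn) hfm.aestronglyMeasurable]
  set ε : ℝ := 1/(20*n) with hε
  have hε0 : 0 < ε := by positivity
  -- the small set
  set T : Set ℝ := {x | Metric.infDist x β ≤ ε} with hT
  have hTsub : T ⊆ ⋃ a ∈ hfin.toFinset, Metric.closedBall a ε := by
    intro x hx
    obtain ⟨y, hy, hyd⟩ := (hfin.isCompact).exists_infDist_eq_dist hne x
    refine Set.mem_biUnion (hfin.mem_toFinset.mpr hy) ?_
    rw [Metric.mem_closedBall, ← hyd]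
    exact hx
  have hsmall : nuUnif T ≤ ENNReal.ofReal (1/2) := by
    calc nuUnif T ≤ nuUnif (⋃ a ∈ hfin.toFinset, Metric.closedBall a ε) :=
        measure_mono hTsub
    _ ≤ ∑ a ∈ hfin.toFinset, nuUnif (Metric.closedBall a ε) :=
        measure_biUnion_finset_le _ _
    _ ≤ ∑ _a ∈ hfin.toFinset, ((5:ENNReal) * ENNReal.ofReal (2*ε)) := by
        apply Finset.sum_le_sum
        intro a _
        have : nuUnif (Metric.closedBall a ε) ≤ (5:ENNReal) * volume (Metric.closedBall a ε) := by
          simp only [nuUnif, MeasureTheory.Measure.smul_apply, smul_eq_mul]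
          gcongr
          exact MeasureTheory.Measure.restrict_le_self
        rwa [Real.volume_closedBall] at this
    _ = (hfin.toFinset.card : ENNReal) * ((5:ENNReal) * ENNReal.ofReal (2*ε)) := by
        rw [Finset.sum_const, nsmul_eq_mul]
    _ ≤ (n : ENNReal) * ((5:ENNReal) * ENNReal.ofReal (2*ε)) := by
        gcongr
        exact_mod_cast (Set.ncard_eq_toFinset_card β hfin ▸ hcard : hfin.toFinset.card ≤ n)
    _ = ENNReal.ofReal ((n:ℝ) * (5 * (2*ε))) := by
        rw [ENNReal.ofReal_mul (le_of_lt hn0), ENNReal.ofReal_mul (by norm_num : (0:ℝ) ≤ 5),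
          ENNReal.ofReal_natCast, ENNReal.ofReal_ofNat]
    _ = ENNReal.ofReal (1/2) := by
        congr 1
        rw [hε]
        field_simp
        ring
  -- total mass of nuUnif
  have htot : nuUnif Set.univ = 1 := by
    simp only [nuUnif, MeasureTheory.Measure.smul_apply, smul_eq_mul,
      MeasureTheory.Measure.restrict_apply MeasurableSet.univ, Set.univ_inter,
      Real.volume_Icc]
    rw [show (3/5 : ℝ) - 2/5 = 1/5 by norm_num]
    rw [show (5:ENNReal) = ENNReal.ofReal 5 by simp]
    rw [← ENNReal.ofReal_mul (by norm_num)]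
    norm_num
  -- big set lower bound
  have hbig : ENNReal.ofReal (1/2) ≤ nuUnif Tᶜ := by
    have hu : nuUnif Set.univ ≤ nuUnif Tᶜ + nuUnif T := by
      rw [← Set.compl_union_self T]
      exact measure_union_le _ _
    rw [htot] at hu
    have h1 : (1:ENNReal) = ENNReal.ofReal (1/2) + ENNReal.ofReal (1/2) := by
      rw [← ENNReal.ofReal_add (by norm_num) (by norm_num)]
      norm_num
    have h12 : ENNReal.ofReal (1/2) = 1 - ENNReal.ofReal (1/2) := by
      rw [← ENNReal.ofReal_one, ← ENNReal.ofReal_sub _ (by norm_num)]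
      norm_num
    rw [h12, tsub_le_iff_right]
    exact le_trans hu (add_le_add le_rfl hsmall)
  -- lintegral lower bound for nu
  have hInu : ENNReal.ofReal (1/(800 * n^2)) ≤ ∫⁻ x, ENNReal.ofReal (f x) ∂nuUnif := by
    calc ENNReal.ofReal (1/(800 * n^2)) = ENNReal.ofReal (ε^2) * ENNReal.ofReal (1/2) := by
          rw [← ENNReal.ofReal_mul (by positivity)]
          congr 1
          rw [hε]
          field_simp
          ring
    _ ≤ ENNReal.ofReal (ε^2) * nuUnif Tᶜ := by gcongr
    _ = ∫⁻ _x in Tᶜ, ENNReal.ofReal (ε^2) ∂nuUnif := (MeasureTheory.setLIntegral_const _ _).symm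
    _ ≤ ∫⁻ x in Tᶜ, ENNReal.ofReal (f x) ∂nuUnif := by
        apply MeasureTheory.setLIntegral_mono (ENNReal.measurable_ofReal.comp hfm)
        intro x hx
        apply ENNReal.ofReal_le_ofReal
        have : ε < Metric.infDist x β := lt_of_not_ge hx
        exact pow_le_pow_left₀ (le_of_lt hε0) (le_of_lt this) 2
    _ ≤ ∫⁻ x, ENNReal.ofReal (f x) ∂nuUnif := MeasureTheory.setLIntegral_le_lintegral _ _
  -- combine via condensation equation
  have hsplit : (1/3 : ENNReal) * ∫⁻ x, ENNReal.ofReal (f x) ∂nuUnif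
      ≤ ∫⁻ x, ENNReal.ofReal (f x) ∂P := by
    conv_rhs => rw [hP.2]
    rw [MeasureTheory.lintegral_add_measure, MeasureTheory.lintegral_add_measure]
    simp only [MeasureTheory.lintegral_smul_measure]
    exact le_add_self
  have hkey : ENNReal.ofReal (1/(2400 * n^2)) ≤ ∫⁻ x, ENNReal.ofReal (f x) ∂P := by
    refine le_trans ?_ hsplit
    calc ENNReal.ofReal (1/(2400 * n^2)) = (1/3 : ENNReal) * ENNReal.ofReal (1/(800 * n^2)) := by
          rw [show (1/3 : ENNReal) = ENNReal.ofReal (1/3) by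
            rw [ENNReal.ofReal_div_of_pos (by norm_num)]; norm_num]
          rw [← ENNReal.ofReal_mul (by norm_num)]
          congr 1
          field_simp
          ring
    _ ≤ (1/3 : ENNReal) * ∫⁻ x, ENNReal.ofReal (f x) ∂nuUnif := by gcongr
  have hfin' : ∫⁻ x, ENNReal.ofReal (f x) ∂P ≠ ⊤ := hint.lintegral_lt_top.ne
  rw [heqd]
  calc (1:ℝ)/(2400 * n^2) = (ENNReal.ofReal (1/(2400 * n^2))).toReal := by
        rw [ENNReal.toReal_ofReal (by positivity)]
  _ ≤ (∫⁻ x, ENNReal.ofReal (f x) ∂P).toReal := ENNReal.toReal_mono hfin' hkey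

lemma tendsto_aux (K : ℝ) (hK : 0 < K) :
    Filter.Tendsto (fun n : ℕ => 2 * Real.log n / (2 * Real.log n + K))
      Filter.atTop (nhds 1) := by
  have hlog : Filter.Tendsto (fun n : ℕ => Real.log n) Filter.atTop Filter.atTop :=
    Real.tendsto_log_atTop.comp tendsto_natCast_atTop_atTop
  have hd : Filter.Tendsto (fun n : ℕ => 2 * Real.log n + K) Filter.atTop Filter.atTop :=
    (hlog.const_mul_atTop two_pos).atTop_add tendsto_const_nhds
  have hinv : Filter.Tendsto (fun n : ℕ => (2 * Real.log n + K)⁻¹) Filter.atTop (nhds 0) :=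
    hd.inv_tendsto_atTop
  have h1 : Filter.Tendsto (fun n : ℕ => 1 - K * (2 * Real.log n + K)⁻¹)
      Filter.atTop (nhds 1) := by
    have := (tendsto_const_nhds (x := (1:ℝ)) (f := Filter.atTop (α := ℕ))).sub
      ((tendsto_const_nhds (x := K)).mul hinv)
    simpa using this
  apply h1.congr'
  filter_upwards [Filter.eventually_ge_atTop 1] with n hn
  have hlogn : 0 ≤ Real.log n := Real.log_natCast_nonneg n
  have hden : 0 < 2 * Real.log n + K := by linarith
  field_simp
  ring

end QDim

theorem quantization_dimension_uniform (P : MeasureTheory.Measure ℝ)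
    (hP : IsCondensation P nuUnif) :
    Filter.Tendsto (fun n : ℕ => 2 * Real.log n / (-Real.log (quantErr P n)))
      Filter.atTop (nhds 1) := by
  have hlb := QDim.lower_bound P hP
  have hub := QDim.upper_bound P hP
  have hl4 : (0:ℝ) < Real.log 4 := Real.log_pos (by norm_num)
  have hl24 : (0:ℝ) < Real.log 2400 := Real.log_pos (by norm_num)
  apply tendsto_of_tendsto_of_tendsto_of_le_of_le' (QDim.tendsto_aux (Real.log 2400) hl24)
    (QDim.tendsto_aux (Real.log 4) hl4)
  all_goals
    filter_upwards [Filter.eventually_ge_atTop 2] with n hn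
  all_goals {
    have hn1 : 1 ≤ n := by omega
    have hn0 : (0:ℝ) < n := by exact_mod_cast hn1
    have hnne : ((n:ℝ))^2 ≠ 0 := by positivity
    have hlogn : 0 < Real.log n := by
      apply Real.log_pos
      exact_mod_cast by omega
    set V := quantErr P n with hV
    have hV1 := hlb n hn1
    have hV2 := hub n hn1
    have hV0 : 0 < V := lt_of_lt_of_le (by positivity) hV1
    have hlow : Real.log (1/(2400 * (n:ℝ)^2)) ≤ Real.log V :=
      Real.log_le_log (by positivity) hV1
    have hhigh : Real.log V ≤ Real.log (1/(4 * (n:ℝ)^2)) :=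
      Real.log_le_log hV0 hV2
    have e1 : Real.log (1/(2400 * (n:ℝ)^2)) = -(Real.log 2400 + 2 * Real.log n) := by
      rw [one_div, Real.log_inv, Real.log_mul (by norm_num) hnne, Real.log_pow]
      push_cast
      ring
    have e2 : Real.log (1/(4 * (n:ℝ)^2)) = -(Real.log 4 + 2 * Real.log n) := by
      rw [one_div, Real.log_inv, Real.log_mul (by norm_num) hnne, Real.log_pow]
      push_cast
      ring
    rw [e1] at hlow
    rw [e2] at hhigh
    have hpos : 0 < -Real.log V := by linarith
    first
    | -- lower bound: 2 log n / (2 log n + log 2400) ≤ 2 log n / (-log V)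
      apply div_le_div_of_nonneg_left (by linarith) hpos (by linarith)
    | -- upper bound
      apply div_le_div_of_nonneg_left (by linarith) (by linarith) (by linarith)
  }
end

section
/- The one-dimensional lower and upper quantization coefficients of the condensation measure P are finite and positive; more precisely, 1/2064 ≤ liminf_{n→∞} n²·V_n(P) ≤ limsup_{n→∞} n²·V_n(P) ≤ 16/129. -/
open MeasureTheory Metric Set Filter

/-! ### Auxiliary lemmas -/

namespace QuantAux

lemma S1_meas : Measurable S1 := (continuous_id.div_const 5).measurable
lemma S2_meas : Measurable S2 := ((continuous_id.div_const 5).add continuous_const).measurable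

lemma P_apply (P : Measure ℝ) (hP : IsCondensation P nuUnif) (A : Set ℝ) (hA : MeasurableSet A) :
    P A = 1/3 * P (S1 ⁻¹' A) + 1/3 * P (S2 ⁻¹' A) + 1/3 * nuUnif A := by
  conv_lhs => rw [hP.2]
  rw [Measure.add_apply, Measure.add_apply, Measure.smul_apply, Measure.smul_apply,
    Measure.smul_apply, Measure.map_apply S1_meas hA, Measure.map_apply S2_meas hA,
    smul_eq_mul, smul_eq_mul, smul_eq_mul]

/-- The support region of `P`. -/
def K : Set ℝ := Set.Icc 0 (1/5) ∪ Set.Icc (2/5) (3/5) ∪ Set.Icc (4/5) 1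

lemma nuUnif_null {A : Set ℝ} (hA : MeasurableSet A)
    (h : A ∩ Set.Icc (2/5 : ℝ) (3/5) = ∅) : nuUnif A = 0 := by
  rw [nuUnif, Measure.smul_apply, Measure.restrict_apply hA, h, measure_empty, smul_zero]

instance nuUnif_prob : IsProbabilityMeasure nuUnif := by
  constructor
  rw [nuUnif, Measure.smul_apply, Measure.restrict_apply MeasurableSet.univ, Set.univ_inter,
    Real.volume_Icc, smul_eq_mul]
  rw [show (3/5 : ℝ) - 2/5 = 1/5 by norm_num]
  rw [ENNReal.ofReal_div_of_pos (by norm_num), ENNReal.ofReal_one, ENNReal.ofReal_ofNat]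
  rw [ENNReal.mul_div_cancel' (by norm_num) (by norm_num)]

lemma P_unit (P : Measure ℝ) (hP : IsCondensation P nuUnif) : P (Set.Icc (0:ℝ) 1)ᶜ = 0 := by
  haveI := hP.1
  set A := (Set.Icc (0:ℝ) 1)ᶜ with hA
  have hAm : MeasurableSet A := measurableSet_Icc.compl
  have h1 : S1 ⁻¹' A ⊆ A := by
    intro x hx
    simp only [hA, Set.mem_compl_iff, Set.mem_preimage, Set.mem_Icc, S1] at hx ⊢
    intro h; exact hx ⟨by linarith [h.1], by linarith [h.2]⟩
  have h2 : S2 ⁻¹' A ⊆ A := by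
    intro x hx
    simp only [hA, Set.mem_compl_iff, Set.mem_preimage, Set.mem_Icc, S2] at hx ⊢
    intro h; exact hx ⟨by linarith [h.1], by linarith [h.2]⟩
  have hν : nuUnif A = 0 := by
    apply nuUnif_null hAm
    ext x
    simp only [hA, Set.mem_inter_iff, Set.mem_compl_iff, Set.mem_Icc,
      Set.mem_empty_iff_false, iff_false]
    rintro ⟨h, h1', h2'⟩; exact h ⟨by linarith, by linarith⟩
  have key := P_apply P hP A hAm
  rw [hν, mul_zero, add_zero] at key
  have hle : P A ≤ 2/3 * P A := by
    calc P A = 1/3 * P (S1 ⁻¹' A) + 1/3 * P (S2 ⁻¹' A) := key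
    _ ≤ 1/3 * P A + 1/3 * P A :=
        add_le_add (mul_le_mul_right (measure_mono h1) _) (mul_le_mul_right (measure_mono h2) _)
    _ = 2/3 * P A := by rw [← add_mul, div_eq_mul_inv, div_eq_mul_inv, one_mul, ← two_mul]
  have hfin : P A ≠ ⊤ := measure_ne_top P A
  by_contra hne
  have htop : (2/3 : ENNReal) * P A ≠ ⊤ := ENNReal.mul_ne_top (by simp [ENNReal.div_eq_top]) hfin
  have := (ENNReal.toReal_le_toReal hfin htop).mpr hle
  rw [ENNReal.toReal_mul] at this
  have h23 : ((2:ENNReal)/3).toReal = 2/3 := by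
    rw [ENNReal.toReal_div]; norm_num
  rw [h23] at this
  have hp : 0 < (P A).toReal := ENNReal.toReal_pos hne hfin
  linarith

lemma P_K (P : Measure ℝ) (hP : IsCondensation P nuUnif) : P Kᶜ = 0 := by
  have hKm : MeasurableSet K :=
    ((measurableSet_Icc.union measurableSet_Icc).union measurableSet_Icc)
  have key := P_apply P hP Kᶜ hKm.compl
  have h1 : S1 ⁻¹' Kᶜ ⊆ (Set.Icc (0:ℝ) 1)ᶜ := by
    intro x hx
    simp only [Set.mem_preimage, Set.mem_compl_iff, K, Set.mem_union, Set.mem_Icc, S1] at hx ⊢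
    intro h
    exact hx (Or.inl (Or.inl ⟨by linarith [h.1], by linarith [h.2]⟩))
  have h2 : S2 ⁻¹' Kᶜ ⊆ (Set.Icc (0:ℝ) 1)ᶜ := by
    intro x hx
    simp only [Set.mem_preimage, Set.mem_compl_iff, K, Set.mem_union, Set.mem_Icc, S2] at hx ⊢
    intro h
    exact hx (Or.inr ⟨by linarith [h.1], by linarith [h.2]⟩)
  have hν : nuUnif Kᶜ = 0 := by
    apply nuUnif_null hKm.compl
    ext x
    simp only [Set.mem_inter_iff, Set.mem_compl_iff, K, Set.mem_union, Set.mem_Icc,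
      Set.mem_empty_iff_false, iff_false]
    rintro ⟨h, hx⟩; exact h (Or.inl (Or.inr hx))
  rw [key, hν, mul_zero, add_zero,
    measure_mono_null h1 (P_unit P hP), measure_mono_null h2 (P_unit P hP), mul_zero, add_zero]

lemma fcont (α : Set ℝ) : Continuous (fun x : ℝ => (infDist x α) ^ 2) :=
  (continuous_infDist_pt α).pow 2

lemma distortion_nonneg (μ : Measure ℝ) (α : Set ℝ) : 0 ≤ distortion μ α :=
  integral_nonneg (fun _ => pow_two_nonneg _)

lemma quantErr_nonneg (μ : Measure ℝ) (n : ℕ) : 0 ≤ quantErr μ n := by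
  apply Real.sInf_nonneg
  rintro e ⟨α, _, _, _, rfl⟩
  exact distortion_nonneg μ α

lemma integrable_f (P : Measure ℝ) (hP : IsCondensation P nuUnif) {α : Set ℝ}
    (hne : α.Nonempty) : Integrable (fun x : ℝ => (infDist x α) ^ 2) P := by
  haveI := hP.1
  obtain ⟨a₀, ha₀⟩ := hne
  apply Integrable.mono' (integrable_const ((1 + |a₀|)^2)) (fcont α).aestronglyMeasurable
  have hae : ∀ᵐ x ∂P, x ∈ Set.Icc (0:ℝ) 1 := by
    rw [ae_iff]
    convert P_unit P hP using 2
    rfl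
  filter_upwards [hae] with x hx
  rw [Real.norm_eq_abs, abs_of_nonneg (pow_two_nonneg _)]
  have h1 : infDist x α ≤ dist x a₀ := infDist_le_dist_of_mem ha₀
  have h2 : dist x a₀ ≤ 1 + |a₀| := by
    rw [Real.dist_eq]
    have hx1 : |x| ≤ 1 := by rw [abs_le]; constructor <;> [linarith [hx.1]; exact hx.2]
    calc |x - a₀| ≤ |x| + |a₀| := abs_sub x a₀
    _ ≤ 1 + |a₀| := by linarith
  have h0 : 0 ≤ infDist x α := infDist_nonneg
  nlinarith

/-! ### Lower bound -/

lemma distortion_ge (P : Measure ℝ) (hP : IsCondensation P nuUnif) (n : ℕ) (hn : 1 ≤ n)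
    {α : Set ℝ} (hfin : α.Finite) (hne : α.Nonempty) (hcard : α.ncard ≤ n) :
    1/(2025 * (n:ℝ)^2) ≤ distortion P α := by
  haveI := hP.1
  set f : ℝ → ℝ := fun x => (infDist x α) ^ 2 with hf
  have hnpos : (0:ℝ) < n := by exact_mod_cast hn
  set ε : ℝ := 1/(15*n) with hε
  have hεpos : 0 < ε := by positivity
  set E : Set ℝ := {x | ε ≤ infDist x α} with hE
  have hEm : MeasurableSet E :=
    (isClosed_le continuous_const (continuous_infDist_pt α)).measurableSet
  have hcover : Eᶜ ⊆ ⋃ a ∈ hfin.toFinset, ball a ε := by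
    intro x hx
    simp only [hE, Set.mem_compl_iff, Set.mem_setOf_eq, not_le] at hx
    obtain ⟨y, hy, hdy⟩ := (infDist_lt_iff hne).mp hx
    exact Set.mem_biUnion (hfin.mem_toFinset.mpr hy) (mem_ball.mpr hdy)
  have hball : ∀ a : ℝ, nuUnif (ball a ε) ≤ ENNReal.ofReal (10*ε) := by
    intro a
    rw [nuUnif, Measure.smul_apply, Measure.restrict_apply measurableSet_ball, smul_eq_mul]
    calc (5:ENNReal) * volume (ball a ε ∩ _) ≤ 5 * volume (ball a ε) := by
          gcongr; exact Set.inter_subset_left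
    _ = 5 * ENNReal.ofReal (2*ε) := by rw [Real.volume_ball]
    _ = ENNReal.ofReal (10*ε) := by
        rw [← ENNReal.ofReal_ofNat, ← ENNReal.ofReal_mul (by norm_num)]
        ring_nf
  have hEc : nuUnif Eᶜ ≤ ENNReal.ofReal (2/3) := by
    calc nuUnif Eᶜ ≤ nuUnif (⋃ a ∈ hfin.toFinset, ball a ε) := measure_mono hcover
    _ ≤ ∑ a ∈ hfin.toFinset, nuUnif (ball a ε) := measure_biUnion_finset_le _ _
    _ ≤ ∑ _a ∈ hfin.toFinset, ENNReal.ofReal (10*ε) := Finset.sum_le_sum (fun a _ => hball a)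
    _ = (hfin.toFinset.card : ENNReal) * ENNReal.ofReal (10*ε) := by
        rw [Finset.sum_const, nsmul_eq_mul]
    _ ≤ (n : ENNReal) * ENNReal.ofReal (10*ε) := by
        gcongr
        exact_mod_cast (by rwa [Set.ncard_eq_toFinset_card α hfin] at hcard)
    _ = ENNReal.ofReal (n * (10*ε)) := by
        rw [show ((n:ℕ):ENNReal) = ENNReal.ofReal ((n:ℕ):ℝ) from (ENNReal.ofReal_natCast n).symm,
          ← ENNReal.ofReal_mul (by positivity)]
    _ = ENNReal.ofReal (2/3) := by
        congr 1
        have hne0 : (n:ℝ) ≠ 0 := ne_of_gt hnpos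
        rw [hε]
        field_simp
        ring
  have hEge : (1/3 : ℝ) ≤ (nuUnif E).toReal := by
    have huniv : (1:ENNReal) ≤ nuUnif E + nuUnif Eᶜ := by
      rw [← measure_univ (μ := nuUnif), ← Set.union_compl_self E]
      exact measure_union_le E Eᶜ
    have h23 : ENNReal.ofReal (2/3) = 2/3 := by
      rw [ENNReal.ofReal_div_of_pos (by norm_num)]; norm_num
    by_contra hlt
    push_neg at hlt
    have hEfin : nuUnif E ≠ ⊤ := measure_ne_top _ _
    have hElt : nuUnif E < 1/3 := by
      rw [show (1/3 : ENNReal) = ENNReal.ofReal (1/3) by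
        rw [ENNReal.ofReal_div_of_pos (by norm_num)]; norm_num]
      rw [← ENNReal.ofReal_toReal hEfin]
      exact ENNReal.ofReal_lt_ofReal_iff (by norm_num) |>.mpr hlt
    have hsum : nuUnif E + nuUnif Eᶜ < 1/3 + 2/3 := by
      apply ENNReal.add_lt_add_of_lt_of_le (by simp [ENNReal.div_eq_top]) hElt
      rw [← h23]; exact hEc
    rw [show (1/3 + 2/3 : ENNReal) = 1 by
      rw [ENNReal.div_add_div_same, show (1+2:ENNReal) = 3 by norm_num,
        ENNReal.div_self (by norm_num) (by norm_num)]] at hsum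
    exact absurd huniv (not_le.mpr hsum)
  have hintP : Integrable f P := integrable_f P hP hne
  have hle13 : ((1/3 : ENNReal) • nuUnif) ≤ P := by
    conv_rhs => rw [hP.2]
    exact Measure.le_add_left le_rfl
  have hintν : Integrable f nuUnif := by
    have h1 : Integrable f ((1/3 : ENNReal) • nuUnif) := hintP.mono_measure hle13
    exact (integrable_smul_measure (by norm_num) (by simp [ENNReal.div_eq_top])).mp h1
  have hνint : ε^2 * (1/3 : ℝ) ≤ ∫ x, f x ∂nuUnif := by
    have hg : Integrable (E.indicator (fun _ => ε^2)) nuUnif :=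
      (integrable_const (ε^2)).indicator hEm
    have hmono : ∀ x, E.indicator (fun _ => ε^2) x ≤ f x := by
      intro x
      by_cases hx : x ∈ E
      · rw [Set.indicator_of_mem hx]
        exact pow_le_pow_left₀ hεpos.le hx 2
      · rw [Set.indicator_of_notMem hx]
        exact pow_two_nonneg _
    calc ε^2 * (1/3 : ℝ) ≤ ε^2 * (nuUnif E).toReal := by nlinarith [pow_two_nonneg ε]
    _ = ∫ x, E.indicator (fun _ => ε^2) x ∂nuUnif := by
        rw [integral_indicator_const _ hEm, smul_eq_mul, mul_comm, measureReal_def]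
    _ ≤ ∫ x, f x ∂nuUnif := integral_mono hg hintν hmono
  have hsplit : distortion P α =
      (∫ x, f x ∂((1/3 : ENNReal) • P.map S1 + (1/3 : ENNReal) • P.map S2)) +
      ∫ x, f x ∂((1/3 : ENNReal) • nuUnif) := by
    rw [distortion]
    conv_lhs => rw [hP.2]
    rw [integral_add_measure]
    · refine hintP.mono_measure ?_
      conv_rhs => rw [hP.2]
      exact Measure.le_add_right le_rfl
    · exact hintP.mono_measure hle13
  have h1nn : 0 ≤ ∫ x, f x ∂((1/3 : ENNReal) • P.map S1 + (1/3 : ENNReal) • P.map S2) :=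
    integral_nonneg (fun x => pow_two_nonneg _)
  have hsm : ∫ x, f x ∂((1/3 : ENNReal) • nuUnif) = (1/3 : ℝ) * ∫ x, f x ∂nuUnif := by
    rw [integral_smul_measure, smul_eq_mul]
    congr 1
    rw [ENNReal.toReal_div]
    norm_num
  have hfinal : (1/3 : ℝ) * (ε^2 * (1/3)) ≤ distortion P α := by
    rw [hsplit, hsm]
    have := mul_le_mul_of_nonneg_left hνint (by norm_num : (0:ℝ) ≤ 1/3)
    linarith
  have heq : 1/(2025 * (n:ℝ)^2) = (1/3 : ℝ) * (ε^2 * (1/3)) := by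
    have hne0 : (n:ℝ) ≠ 0 := ne_of_gt hnpos
    rw [hε]
    field_simp
    ring
  linarith

lemma quantErr_ge (P : Measure ℝ) (hP : IsCondensation P nuUnif) (n : ℕ) (hn : 1 ≤ n) :
    1/(2025 * (n:ℝ)^2) ≤ quantErr P n := by
  apply le_csInf
  · exact ⟨distortion P {0}, {0}, Set.finite_singleton 0, Set.singleton_nonempty 0,
      by simp [Set.ncard_singleton]; omega, rfl⟩
  · rintro e ⟨α, hfin, hne, hcard, rfl⟩
    exact distortion_ge P hP n hn hfin hne hcard

/-! ### Upper bound -/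

/-- The grid: for each of the three intervals of `K`, `m` equally spaced points. -/
noncomputable def grid (m : ℕ) : Set ℝ :=
  (fun p : ℕ × ℕ => (2*p.1 : ℝ)/5 + (2*p.2+1)/(10*m)) ''
    ((Finset.range 3 ×ˢ Finset.range m : Finset (ℕ × ℕ)) : Set (ℕ × ℕ))

lemma grid_finite (m : ℕ) : (grid m).Finite :=
  ((Finset.range 3 ×ˢ Finset.range m).finite_toSet).image _

lemma grid_nonempty (m : ℕ) (hm : 1 ≤ m) : (grid m).Nonempty := by
  apply Set.Nonempty.image
  rw [Finset.coe_nonempty, Finset.nonempty_product]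
  exact ⟨Finset.nonempty_range_iff.mpr (by norm_num), Finset.nonempty_range_iff.mpr (by omega)⟩

lemma grid_ncard (m : ℕ) : (grid m).ncard ≤ 3 * m := by
  calc (grid m).ncard
      ≤ ((Finset.range 3 ×ˢ Finset.range m : Finset (ℕ × ℕ)) : Set (ℕ × ℕ)).ncard :=
        Set.ncard_image_le (Finset.range 3 ×ˢ Finset.range m).finite_toSet
  _ = 3 * m := by
      rw [Set.ncard_coe_finset, Finset.card_product, Finset.card_range, Finset.card_range]

lemma exists_close (y : ℝ) (m : ℕ) (hm : 1 ≤ m) (h0 : 0 ≤ y) (h1 : y ≤ m) :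
    ∃ i : ℕ, i < m ∧ |y - ((i:ℝ) + 1/2)| ≤ 1/2 := by
  by_cases h : y < m
  · refine ⟨⌊y⌋₊, ?_, ?_⟩
    · exact Nat.floor_lt h0 |>.mpr (by exact_mod_cast h)
    · have h2 := Nat.floor_le h0
      have h3 := Nat.lt_floor_add_one y
      rw [abs_le]; constructor <;> push_cast at h3 ⊢ <;> linarith
  · refine ⟨m - 1, by omega, ?_⟩
    have hy : y = m := le_antisymm h1 (not_lt.mp h)
    have hc : ((m - 1 : ℕ) : ℝ) = (m:ℝ) - 1 := by
      push_cast [Nat.cast_sub hm]; ring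
    rw [abs_le]; constructor <;> rw [hc] <;> nlinarith

lemma interval_close (m : ℕ) (hm : 1 ≤ m) (j : ℕ) (hj : j < 3) (x : ℝ)
    (hx : x ∈ Set.Icc ((2*j : ℝ)/5) ((2*j : ℝ)/5 + 1/5)) :
    infDist x (grid m) ≤ 1/(10*m) := by
  set a : ℝ := (2*j : ℝ)/5 with ha
  have hmpos : (0:ℝ) < m := by exact_mod_cast hm
  set y : ℝ := (x - a) * (5*m) with hy
  have h0 : 0 ≤ y := mul_nonneg (by linarith [hx.1]) (by positivity)
  have h1 : y ≤ m := by
    rw [hy]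
    have hxa : x - a ≤ 1/5 := by linarith [hx.2]
    calc (x - a) * (5*m) ≤ (1/5) * (5*m) :=
          mul_le_mul_of_nonneg_right hxa (by positivity)
    _ = m := by ring
  obtain ⟨i, him, hi⟩ := exists_close y m hm h0 h1
  have hmem : a + (2*i+1)/(10*m) ∈ grid m := by
    refine ⟨(j, i), ?_, by push_cast; ring⟩
    simp only [Finset.coe_product, Set.mem_prod, Finset.mem_coe, Finset.mem_range]
    exact ⟨hj, him⟩
  calc infDist x (grid m) ≤ dist x (a + (2*i+1)/(10*m)) := infDist_le_dist_of_mem hmem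
  _ = |y - ((i:ℝ) + 1/2)| / (5*m) := by
      rw [Real.dist_eq, hy]
      rw [show x - (a + (2*(i:ℝ)+1)/(10*m)) = ((x-a)*(5*m) - ((i:ℝ)+1/2)) / (5*m) by
        field_simp; ring]
      rw [abs_div, abs_of_pos (by positivity : (0:ℝ) < 5*m)]
  _ ≤ (1/2) / (5*m) := div_le_div_of_nonneg_right hi (by positivity) |>.trans_eq rfl
  _ = 1/(10*m) := by field_simp; ring

lemma K_close (m : ℕ) (hm : 1 ≤ m) (x : ℝ) (hx : x ∈ K) :
    infDist x (grid m) ≤ 1/(10*m) := by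
  rcases hx with (h | h) | h
  · exact interval_close m hm 0 (by norm_num) x (by push_cast; norm_num; exact h)
  · exact interval_close m hm 1 (by norm_num) x (by push_cast; norm_num; exact h)
  · exact interval_close m hm 2 (by norm_num) x (by push_cast; norm_num; exact h)

lemma distortion_grid_le (P : Measure ℝ) (hP : IsCondensation P nuUnif) (m : ℕ) (hm : 1 ≤ m) :
    distortion P (grid m) ≤ 1/(100*(m:ℝ)^2) := by
  haveI := hP.1
  have hmpos : (0:ℝ) < m := by exact_mod_cast hm
  have hae : ∀ᵐ x ∂P, x ∈ K := by
    rw [ae_iff]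
    convert P_K P hP using 2
    rfl
  have hbound : ∀ᵐ x ∂P, (infDist x (grid m))^2 ≤ 1/(100*(m:ℝ)^2) := by
    filter_upwards [hae] with x hx
    have h := K_close m hm x hx
    have h0 : 0 ≤ infDist x (grid m) := infDist_nonneg
    calc (infDist x (grid m))^2 ≤ (1/(10*m))^2 := by nlinarith
    _ = 1/(100*(m:ℝ)^2) := by field_simp; ring
  calc distortion P (grid m) ≤ ∫ _, 1/(100*(m:ℝ)^2) ∂P := by
        apply integral_mono_of_nonneg
        · exact Filter.Eventually.of_forall (fun x => pow_two_nonneg _)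
        · exact integrable_const _
        · exact hbound
  _ = 1/(100*(m:ℝ)^2) := by
      rw [integral_const, measureReal_def, measure_univ, ENNReal.toReal_one, one_smul]

lemma quantErr_le (P : Measure ℝ) (hP : IsCondensation P nuUnif) (n m : ℕ) (hm : 1 ≤ m)
    (hmn : 3 * m ≤ n) : quantErr P n ≤ 1/(100*(m:ℝ)^2) := by
  have hmem : distortion P (grid m) ∈
      {e : ℝ | ∃ α : Set ℝ, α.Finite ∧ α.Nonempty ∧ α.ncard ≤ n ∧ e = distortion P α} :=
    ⟨grid m, grid_finite m, grid_nonempty m hm, le_trans (grid_ncard m) hmn, rfl⟩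
  have hbdd : BddBelow {e : ℝ | ∃ α : Set ℝ, α.Finite ∧ α.Nonempty ∧ α.ncard ≤ n ∧
      e = distortion P α} := by
    refine ⟨0, ?_⟩
    rintro e ⟨α, _, _, _, rfl⟩
    exact distortion_nonneg P α
  exact le_trans (csInf_le hbdd hmem) (distortion_grid_le P hP m hm)

end QuantAux

open QuantAux in
theorem quantization_coefficients_bounds_uniform (P : MeasureTheory.Measure ℝ)
    (hP : IsCondensation P nuUnif) :
    1 / 2064 ≤ Filter.liminf (fun n : ℕ => (n : ℝ) ^ 2 * quantErr P n) Filter.atTop ∧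
    Filter.liminf (fun n : ℕ => (n : ℝ) ^ 2 * quantErr P n) Filter.atTop ≤
      Filter.limsup (fun n : ℕ => (n : ℝ) ^ 2 * quantErr P n) Filter.atTop ∧
    Filter.limsup (fun n : ℕ => (n : ℝ) ^ 2 * quantErr P n) Filter.atTop ≤ 16 / 129 := by
  set f : ℕ → ℝ := fun n => (n : ℝ) ^ 2 * quantErr P n with hfdef
  have hub : ∀ᶠ n in atTop, f n ≤ 16/129 := by
    filter_upwards [eventually_ge_atTop 14] with n hn
    set m : ℕ := n / 3 with hm
    have hm1 : 1 ≤ m := by omega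
    have hmn : 3 * m ≤ n := by omega
    have hq := quantErr_le P hP n m hm1 hmn
    have hq0 := quantErr_nonneg P n
    have hmr : (n:ℝ) ≤ 3*(m:ℝ) + 2 := by
      have : n ≤ 3*m + 2 := by omega
      exact_mod_cast this
    have hnr : (14:ℝ) ≤ n := by exact_mod_cast hn
    have hmpos : (0:ℝ) < m := by
      have : (1:ℝ) ≤ m := by exact_mod_cast hm1
      linarith
    have h1 : f n ≤ (n:ℝ)^2 * (1/(100*(m:ℝ)^2)) :=
      mul_le_mul_of_nonneg_left hq (by positivity)
    have h2 : (n:ℝ)^2 * (1/(100*(m:ℝ)^2)) ≤ 16/129 := by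
      rw [mul_one_div, div_le_div_iff₀ (by positivity) (by norm_num)]
      nlinarith [sq_nonneg ((n:ℝ) - 14), sq_nonneg (3*(m:ℝ) - (n:ℝ) + 2)]
    linarith
  have hlb : ∀ᶠ n in atTop, (1/2025 : ℝ) ≤ f n := by
    filter_upwards [eventually_ge_atTop 1] with n hn
    have hq := quantErr_ge P hP n hn
    have hnpos : (0:ℝ) < n := by exact_mod_cast hn
    have h1 : (n:ℝ)^2 * (1/(2025*(n:ℝ)^2)) ≤ f n :=
      mul_le_mul_of_nonneg_left hq (by positivity)
    have h2 : (n:ℝ)^2 * (1/(2025*(n:ℝ)^2)) = 1/2025 := by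
      field_simp
    linarith
  have hbdd_above : IsBoundedUnder (· ≤ ·) atTop f :=
    isBoundedUnder_of_eventually_le hub
  have hbdd_below : IsBoundedUnder (· ≥ ·) atTop f :=
    isBoundedUnder_of_eventually_ge hlb
  refine ⟨?_, ?_, ?_⟩
  · have h := le_liminf_of_le hbdd_above.isCoboundedUnder_ge
      (hlb.mono (fun n h => le_trans (by norm_num : (1/2064 : ℝ) ≤ 1/2025) h))
    exact h
  · exact liminf_le_limsup hbdd_above hbdd_below
  · exact limsup_le_of_le hbdd_below.isCoboundedUnder_le hub
end
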